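/- arXiv:1407.8391 — 6 statements merged into one kernel-verified Lean document; each statement's English description precedes it below -/
import Mathlib

section
/- For every real constant c > 0 there exists a constant c' > 0 such that for all sufficiently large integers n and every positive integer q ≤ c·n, in the (q:1) Waiter-Client game on E(K_n) Waiter has a strategy to ensure that at the end of the game Client's graph contains a path on at least c'·ln n vertices (in particular, a connected component with at least c'·ln n vertices). -/
open SimpleGraph

/-- In the Waiter-Client game with bias `q`, set of free elements `F` and set `C` of elements
claimed so far by Client, Client has a strategy to ensure that the final set of elements
claimed by him satisfies `P`.  In every round Waiter offers `q + 1` free elements, Client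
claims one of them and the remaining `q` go to Waiter; when fewer than `q + 1` free elements
remain, Waiter claims all of them and the game ends. -/
def ClientCanEnsure {α : Type*} [DecidableEq α] (q : ℕ) (P : Finset α → Prop)
    (F C : Finset α) : Prop :=
  if F.card < q + 1 then P C
  else ∀ O ⊆ F, O.card = q + 1 → ∃ x ∈ O, ClientCanEnsure q P (F \ O) (insert x C)
  termination_by F.card
  decreasing_by
    have h1 : O.Nonempty := by rw [← Finset.card_pos]; omega
    have h2 : (F \ O).card = F.card - O.card := by
      rw [Finset.card_sdiff, Finset.inter_eq_left.mpr ‹O ⊆ F›]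
    have h3 := Finset.card_le_card ‹O ⊆ F›
    have h4 := Finset.card_pos.mpr h1
    omega

/-- In the Waiter-Client game with bias `q`, set of free elements `F` and set `C` of elements
claimed so far by Client, Waiter has a strategy to ensure that the final set of elements
claimed by Client satisfies `P`.  In every round Waiter offers `q + 1` free elements, Client
claims one of them and the remaining `q` go to Waiter; when fewer than `q + 1` free elements
remain, Waiter claims all of them and the game ends.  (The hypothesis `O ⊆ F` guarding the
recursive call is redundant; it is only there to justify termination.) -/
def WaiterCanForce {α : Type*} [DecidableEq α] (q : ℕ) (P : Finset α → Prop)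
    (F C : Finset α) : Prop :=
  if F.card < q + 1 then P C
  else ∃ O ⊆ F, O.card = q + 1 ∧
    ∀ x ∈ O, O ⊆ F → WaiterCanForce q P (F \ O) (insert x C)
  termination_by F.card
  decreasing_by
    have h1 : O.Nonempty := ⟨x, ‹x ∈ O›⟩
    have h2 : (F \ O).card = F.card - O.card := by
      rw [Finset.card_sdiff, Finset.inter_eq_left.mpr ‹O ⊆ F›]
    have h3 := Finset.card_le_card ‹O ⊆ F›
    have h4 := Finset.card_pos.mpr h1
    omega

/-- Client's graph: the simple graph on `V` whose edges are the elements claimed by Client. -/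
def clientGraph {V : Type*} (C : Finset (Sym2 V)) : SimpleGraph V :=
  SimpleGraph.fromEdgeSet ↑C

/-- The board of the game played on `E(K_n)`: all non-loop edges of the complete graph `K_n`. -/
def knBoard (n : ℕ) : Finset (Sym2 (Fin n)) :=
  Finset.univ.filter fun e => ¬ e.IsDiag

/-!
Waiter maintains a family of vertex-disjoint Client paths, each with a designated head and tail,
such that all head–head pairs and all tail–tail pairs are still free.  In a doubling round he
offers only head–head edges; every edge Client takes joins two paths at their heads into one
with twice as many vertices whose ends are two old tails, and Waiter then stops offering edges at
those two heads.  With `Q = max (q + 1) (n / 2)`, a round turns `k` paths into about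
`k ^ 2 / (64 Q)` of them.  Starting from `Θ(n)` disjoint edges between two halves of the vertex
set, so that `64 Q ≤ L k` with `L = O(c ^ 2)`, every round squares `L` in this inequality, and the
family survives as long as `L ^ (2 ^ t) ≤ Q`, that is for `log₂ (log_L n)` rounds, leaving a
path on about `log_L n` vertices.
-/

section Game

variable {α : Type*} [DecidableEq α] {q : ℕ}

inductive WaiterCanReach (q : ℕ) (R : Finset α → Finset α → Prop) :
    Finset α → Finset α → Prop
  | reached {F C : Finset α} : R F C → WaiterCanReach q R F C
  | offer {F C : Finset α} (O : Finset α) : O ⊆ F → O.card = q + 1 →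
      (∀ x ∈ O, WaiterCanReach q R (F \ O) (insert x C)) → WaiterCanReach q R F C

namespace WaiterCanReach

variable {R R' : Finset α → Finset α → Prop} {F C : Finset α}

theorem bind (h : WaiterCanReach q R F C)
    (hR : ∀ F' C', R F' C' → WaiterCanReach q R' F' C') : WaiterCanReach q R' F C := by
  induction h with
  | reached hFC => exact hR _ _ hFC
  | offer O hOF hO _ ih => exact .offer O hOF hO ih

theorem mono (h : WaiterCanReach q R F C) (hR : ∀ F' C', R F' C' → R' F' C') :
    WaiterCanReach q R' F C :=
  h.bind fun F' C' hFC => .reached (hR F' C' hFC)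

end WaiterCanReach

theorem waiterCanForce_of_monotone {P : Finset α → Prop}
    (hP : ∀ C₁ C₂, C₁ ⊆ C₂ → P C₁ → P C₂) (F : Finset α) {C : Finset α} (hC : P C) :
    WaiterCanForce q P F C := by
  induction F using Finset.strongInduction generalizing C with
  | H F ih =>
    rw [WaiterCanForce]
    split_ifs with hF
    · exact hC
    · obtain ⟨O, hOF, hO⟩ := Finset.exists_subset_card_eq (not_lt.mp hF)
      have hO_nonempty : O.Nonempty := Finset.card_pos.mp (by omega)
      exact ⟨O, hOF, hO, fun x _ _ => ih _ (Finset.sdiff_ssubset hOF hO_nonempty)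
        (hP _ _ (Finset.subset_insert x C) hC)⟩

theorem WaiterCanReach.waiterCanForce {P : Finset α → Prop} {F C : Finset α}
    (h : WaiterCanReach q (fun _ C' => P C') F C) (hP : ∀ C₁ C₂, C₁ ⊆ C₂ → P C₁ → P C₂) :
    WaiterCanForce q P F C := by
  induction h with
  | reached hC => exact waiterCanForce_of_monotone hP _ hC
  | @offer F C O hOF hO _ ih =>
    rw [WaiterCanForce, if_neg (by have := Finset.card_le_card hOF; omega)]
    exact ⟨O, hOF, hO, fun x hx _ => ih x hx⟩

end Game

section Matching

variable {V : Type*} [DecidableEq V] {q : ℕ}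

def IsVertexDisjoint (M : Finset (Sym2 V)) : Prop :=
  (M : Set (Sym2 V)).Pairwise fun e f => ∀ x ∈ e, x ∉ f

theorem card_filter_mem_le {G : Finset (Sym2 V)} {H : Finset V}
    (hGH : ∀ e ∈ G, ∀ x ∈ e, x ∈ H) (a : V) : (G.filter (a ∈ ·)).card ≤ H.card := by
  calc _ ≤ (H.image (fun c => s(a, c))).card := by
        refine Finset.card_le_card fun e he => ?_
        obtain ⟨heG, hae⟩ := Finset.mem_filter.mp he
        obtain ⟨c, rfl⟩ := Sym2.mem_iff_exists.mp hae
        exact Finset.mem_image_of_mem _ (hGH _ heG c (Sym2.mem_mk_right a c))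
    _ ≤ H.card := Finset.card_image_le

theorem card_le_card_filter_notMem_add {G : Finset (Sym2 V)} {H : Finset V}
    (hGH : ∀ e ∈ G, ∀ x ∈ e, x ∈ H) (O : Finset (Sym2 V)) (a b : V) :
    G.card ≤ ((G \ O).filter fun e => a ∉ e ∧ b ∉ e).card + O.card + 2 * H.card := by
  have hcover : G ⊆ (G \ O).filter (fun e => a ∉ e ∧ b ∉ e) ∪ O ∪ G.filter (a ∈ ·) ∪
      G.filter (b ∈ ·) := by
    intro e he
    by_cases heO : e ∈ O
    · simp [heO]
    by_cases hae : a ∈ e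
    · simp [he, hae]
    by_cases hbe : b ∈ e
    · simp [he, hbe]
    simp [he, heO, hae, hbe]
  grw [Finset.card_le_card hcover, Finset.card_union_le, Finset.card_union_le,
    Finset.card_union_le, card_filter_mem_le hGH a, card_filter_mem_le hGH b]
  omega

theorem waiterCanReach_vertexDisjoint {H : Finset V} {G F C : Finset (Sym2 V)} (m : ℕ)
    (hGH : ∀ e ∈ G, ∀ x ∈ e, x ∈ H) (hGF : G ⊆ F) (hm : m * (q + 1 + 2 * H.card) ≤ G.card) :
    WaiterCanReach q (fun F' C' => F \ G ⊆ F' ∧ C ⊆ C' ∧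
      ∃ M ⊆ G, M ⊆ C' ∧ M.card = m ∧ IsVertexDisjoint M) F C := by
  induction m generalizing G F C with
  | zero =>
    exact .reached ⟨Finset.sdiff_subset, subset_rfl, ∅, Finset.empty_subset _,
      Finset.empty_subset _, rfl, by simp [IsVertexDisjoint]⟩
  | succ m ih =>
    obtain ⟨O, hOG, hO⟩ := Finset.exists_subset_card_eq (show q + 1 ≤ G.card by nlinarith)
    refine .offer O (hOG.trans hGF) hO fun z hz => ?_
    obtain ⟨a, b⟩ := z
    set G' := (G \ O).filter fun e => a ∉ e ∧ b ∉ e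
    have hG'G : G' ⊆ G := (Finset.filter_subset _ _).trans Finset.sdiff_subset
    have hG'F : G' ⊆ F \ O := fun e he =>
      Finset.sdiff_subset_sdiff hGF subset_rfl (Finset.mem_filter.mp he).1
    have hG' := card_le_card_filter_notMem_add hGH O a b
    rw [hO] at hG'
    refine (ih (fun e he => hGH e (hG'G he)) hG'F (by nlinarith)).mono ?_
    rintro F' C' ⟨hF', hC', M, hMG', hMC', hM, hMdisj⟩
    refine ⟨fun e he => hF' ?_, (Finset.subset_insert _ C).trans hC',
      insert s(a, b) M, Finset.insert_subset (hOG hz) (hMG'.trans hG'G),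
      Finset.insert_subset (hC' (Finset.mem_insert_self _ C)) hMC', ?_, ?_⟩
    · obtain ⟨heF, heG⟩ := Finset.mem_sdiff.mp he
      exact Finset.mem_sdiff.mpr ⟨Finset.mem_sdiff.mpr ⟨heF, fun h => heG (hOG h)⟩,
        fun h => heG (hG'G h)⟩
    · have hzG' : s(a, b) ∉ G' := fun h => (Finset.mem_sdiff.mp (Finset.mem_filter.mp h).1).2 hz
      rw [Finset.card_insert_of_notMem fun h => hzG' (hMG' h), hM]
    · rw [IsVertexDisjoint, Finset.coe_insert]
      refine hMdisj.insert fun f hf _ => ?_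
      obtain ⟨haf, hbf⟩ := (Finset.mem_filter.mp (hMG' hf)).2
      have hz : ∀ x ∈ s(a, b), x ∉ f := by
        intro x hx
        rcases Sym2.mem_iff.mp hx with rfl | rfl <;> assumption
      exact ⟨hz, fun x hxf hxz => hz x hxz hxf⟩

end Matching

section Paths

variable {V : Type*} {G G' : SimpleGraph V}

theorem clientGraph_mono {C C' : Finset (Sym2 V)} (h : C ⊆ C') : clientGraph C ≤ clientGraph C' :=
  fromEdgeSet_mono (by exact_mod_cast h)

theorem exists_isPath_of_le (hG : G ≤ G') {φ : ℕ → Prop}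
    (h : ∃ (a b : V) (w : G.Walk a b), w.IsPath ∧ φ w.support.length) :
    ∃ (a b : V) (w : G'.Walk a b), w.IsPath ∧ φ w.support.length := by
  obtain ⟨a, b, w, hw, hφ⟩ := h
  exact ⟨a, b, w.mapLe hG, hw.mapLe hG, by rwa [Walk.support_mapLe_eq_support]⟩

def IsPathList (G : SimpleGraph V) (a b : V) (l : List V) : Prop :=
  ∃ w : G.Walk a b, w.IsPath ∧ w.support = l

namespace IsPathList

variable {a b a' b' : V} {l l' : List V}

theorem singleton (a : V) : IsPathList G a a [a] := ⟨.nil, .nil, rfl⟩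

theorem mono (h : IsPathList G a b l) (hG : G ≤ G') : IsPathList G' a b l :=
  let ⟨w, hw, hl⟩ := h
  ⟨w.mapLe hG, hw.mapLe hG, by rw [Walk.support_mapLe_eq_support, hl]⟩

theorem start_mem (h : IsPathList G a b l) : a ∈ l := by
  obtain ⟨w, -, rfl⟩ := h
  exact w.start_mem_support

theorem end_mem (h : IsPathList G a b l) : b ∈ l := by
  obtain ⟨w, -, rfl⟩ := h
  exact w.end_mem_support

theorem ne_of_two_le_length (h : IsPathList G a b l) (hl : 2 ≤ l.length) : a ≠ b := by
  rintro rfl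
  obtain ⟨w, hw, rfl⟩ := h
  rw [Walk.length_support, Walk.length_eq_zero_iff.mpr (Walk.isPath_iff_nil.mp hw)] at hl
  omega

theorem reverse_append (h : IsPathList G a b l) (h' : IsPathList G a' b' l')
    (hadj : G.Adj a a') (hd : l.Disjoint l') : IsPathList G b b' (l.reverse ++ l') := by
  obtain ⟨w, hw, rfl⟩ := h
  obtain ⟨w', hw', rfl⟩ := h'
  have hsupp : (w.reverse.append (.cons hadj w')).support = w.support.reverse ++ w'.support := by
    simp [Walk.support_append]
  refine ⟨_, ?_, hsupp⟩
  rw [Walk.isPath_def, hsupp, List.nodup_append]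
  exact ⟨List.nodup_reverse.mpr hw.support_nodup, hw'.support_nodup,
    fun x hx y hy hxy => hd (List.mem_reverse.mp hx) (hxy ▸ hy)⟩

end IsPathList

structure IsPathFamily (G : SimpleGraph V) (S : Finset (V × V)) (W : V × V → List V) (v : ℕ) :
    Prop where
  isPathList : ∀ p ∈ S, IsPathList G p.1 p.2 (W p)
  le_length : ∀ p ∈ S, v ≤ (W p).length
  disjoint : ∀ p ∈ S, ∀ r ∈ S, p ≠ r → (W p).Disjoint (W r)

def EndsFree (F : Finset (Sym2 V)) (S : Finset (V × V)) : Prop :=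
  ∀ p ∈ S, ∀ r ∈ S, p ≠ r → s(p.1, r.1) ∈ F ∧ s(p.2, r.2) ∈ F

namespace IsPathFamily

variable {S : Finset (V × V)} {W : V × V → List V} {v : ℕ}

theorem mono (hS : IsPathFamily G S W v) (hG : G ≤ G') : IsPathFamily G' S W v :=
  ⟨fun p hp => (hS.isPathList p hp).mono hG, hS.le_length, hS.disjoint⟩

theorem eq_of_fst_eq (hS : IsPathFamily G S W v) {p r : V × V} (hp : p ∈ S) (hr : r ∈ S)
    (h : p.1 = r.1) : p = r := by
  by_contra hpr
  exact hS.disjoint p hp r hr hpr (hS.isPathList p hp).start_mem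
    (h ▸ (hS.isPathList r hr).start_mem)

theorem eq_of_snd_eq (hS : IsPathFamily G S W v) {p r : V × V} (hp : p ∈ S) (hr : r ∈ S)
    (h : p.2 = r.2) : p = r := by
  by_contra hpr
  exact hS.disjoint p hp r hr hpr (hS.isPathList p hp).end_mem
    (h ▸ (hS.isPathList r hr).end_mem)

theorem fst_ne_snd (hS : IsPathFamily G S W v) (hv : 2 ≤ v) {p r : V × V} (hp : p ∈ S)
    (hr : r ∈ S) : p.1 ≠ r.2 := by
  intro h
  by_cases hpr : p = r
  · subst hpr
    exact (hS.isPathList p hp).ne_of_two_le_length (hv.trans (hS.le_length p hp)) h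
  · exact hS.disjoint p hp r hr hpr (hS.isPathList p hp).start_mem
      (h ▸ (hS.isPathList r hr).end_mem)

theorem endsFree {F : Finset (Sym2 V)} {U U' : Finset V} (hS : IsPathFamily G S W v)
    (hSU : ∀ p ∈ S, p.1 ∈ U ∧ p.2 ∈ U')
    (hU : ∀ a ∈ U, ∀ b ∈ U, a ≠ b → s(a, b) ∈ F) (hU' : ∀ a ∈ U', ∀ b ∈ U', a ≠ b → s(a, b) ∈ F) :
    EndsFree F S := fun p hp r hr hpr =>
  ⟨hU _ (hSU p hp).1 _ (hSU r hr).1 fun h => hpr (hS.eq_of_fst_eq hp hr h),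
    hU' _ (hSU p hp).2 _ (hSU r hr).2 fun h => hpr (hS.eq_of_snd_eq hp hr h)⟩

theorem notMem_of_disjoint (hS : IsPathFamily G S W v) {κ : V × V} {L : List V}
    (hL : IsPathList G κ.1 κ.2 L) (hLS : ∀ p ∈ S, L.Disjoint (W p)) : κ ∉ S := fun hκ =>
  hLS κ hκ hL.start_mem (hS.isPathList κ hκ).start_mem

variable [DecidableEq V]

theorem singletons (A : Finset V) :
    IsPathFamily G (A.image fun x => (x, x)) (fun p => [p.1]) 1 := by
  refine ⟨fun p hp => ?_, fun p _ => le_rfl, fun p hp r hr hpr => ?_⟩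
  · obtain ⟨x, -, rfl⟩ := Finset.mem_image.mp hp
    exact IsPathList.singleton x
  · obtain ⟨x, -, rfl⟩ := Finset.mem_image.mp hp
    obtain ⟨y, -, rfl⟩ := Finset.mem_image.mp hr
    simpa [List.disjoint_singleton] using fun h : y = x => hpr (h ▸ rfl)

theorem insert_update (hS : IsPathFamily G S W v) {κ : V × V} {L : List V}
    (hL : IsPathList G κ.1 κ.2 L) (hvL : v ≤ L.length) (hLS : ∀ p ∈ S, L.Disjoint (W p)) :
    IsPathFamily G (insert κ S) (Function.update W κ L) v := by
  have hW : ∀ p ∈ S, Function.update W κ L p = W p := fun p hp =>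
    Function.update_of_ne (by rintro rfl; exact hS.notMem_of_disjoint hL hLS hp) _ _
  refine ⟨fun p hp => ?_, fun p hp => ?_, fun p hp r hr hpr => ?_⟩
  · rcases Finset.mem_insert.mp hp with rfl | hp
    · rwa [Function.update_self]
    · rw [hW p hp]; exact hS.isPathList p hp
  · rcases Finset.mem_insert.mp hp with rfl | hp
    · rwa [Function.update_self]
    · rw [hW p hp]; exact hS.le_length p hp
  · rw [Finset.mem_insert] at hp hr
    rcases hp with hpκ | hpS <;> rcases hr with hrκ | hrS
    · exact absurd (hpκ.trans hrκ.symm) hpr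
    · rw [hpκ, Function.update_self, hW r hrS]; exact hLS r hrS
    · rw [hrκ, Function.update_self, hW p hpS]; exact (hLS p hpS).symm
    · rw [hW p hpS, hW r hrS]; exact hS.disjoint p hpS r hrS hpr

theorem insert_merge (hS : IsPathFamily G S W v) {S' : Finset (V × V)} {W' : V × V → List V}
    (hS' : IsPathFamily G S' W' (2 * v)) {p r : V × V} (hp : p ∈ S) (hr : r ∈ S)
    (hadj : G.Adj p.1 r.1) (hfresh : ∀ k ∈ S', (W' k).Disjoint (W p) ∧ (W' k).Disjoint (W r)) :
    (p.2, r.2) ∉ S' ∧ IsPathFamily G (insert (p.2, r.2) S')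
      (Function.update W' (p.2, r.2) ((W p).reverse ++ W r)) (2 * v) := by
  have hL : IsPathList G p.2 r.2 ((W p).reverse ++ W r) :=
    (hS.isPathList p hp).reverse_append (hS.isPathList r hr) hadj
      (hS.disjoint p hp r hr fun h => hadj.ne (congrArg Prod.fst h))
  have hLS' : ∀ k ∈ S', ((W p).reverse ++ W r).Disjoint (W' k) := by
    intro k hk x hx hxk
    rcases List.mem_append.mp hx with hx | hx
    · exact (hfresh k hk).1 hxk (List.mem_reverse.mp hx)
    · exact (hfresh k hk).2 hxk hx
  refine ⟨hS'.notMem_of_disjoint (κ := (p.2, r.2)) hL hLS',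
    hS'.insert_update (κ := (p.2, r.2)) hL ?_ hLS'⟩
  simp only [List.length_append, List.length_reverse]
  linarith [hS.le_length p hp, hS.le_length r hr]

theorem exists_merge (hS : IsPathFamily G S W v) {U U' : Finset V} {M : Finset (Sym2 V)}
    (hM : IsVertexDisjoint M)
    (hMS : ∀ e ∈ M, ∃ p ∈ S, ∃ r ∈ S, G.Adj p.1 r.1 ∧ p.2 ∈ U ∧ r.2 ∈ U' ∧ e = s(p.1, r.1)) :
    ∃ S' W', S'.card = M.card ∧ IsPathFamily G S' W' (2 * v) ∧ ∀ k ∈ S', k.1 ∈ U ∧ k.2 ∈ U' := by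
  suffices ∃ S' W', S'.card = M.card ∧ IsPathFamily G S' W' (2 * v) ∧
      (∀ k ∈ S', k.1 ∈ U ∧ k.2 ∈ U') ∧
      ∀ k ∈ S', ∀ x ∈ W' k, ∃ p ∈ S, (∃ e ∈ M, p.1 ∈ e) ∧ x ∈ W p by
    obtain ⟨S', W', hcard, hS', hends, -⟩ := this
    exact ⟨S', W', hcard, hS', hends⟩
  induction M using Finset.induction_on with
  | empty => exact ⟨∅, W, rfl, ⟨by simp, by simp, by simp⟩, by simp, by simp⟩
  | insert e M heM ih =>
    obtain ⟨S', W', hcard, hS', hends, hused⟩ :=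
      ih (hM.mono (Finset.coe_subset.mpr (Finset.subset_insert e M)))
        fun f hf => hMS f (Finset.mem_insert_of_mem hf)
    obtain ⟨p, hp, r, hr, hadj, hpU, hrU', rfl⟩ := hMS _ (Finset.mem_insert_self _ _)
    -- the new edge misses every edge of `M`, hence so do the paths it joins
    have hfresh : ∀ t ∈ S, t.1 ∈ s(p.1, r.1) → ∀ k ∈ S', (W' k).Disjoint (W t) := by
      intro t ht hte k hk x hxk hxt
      obtain ⟨t', ht', ⟨f, hf, ht'f⟩, hxt'⟩ := hused k hk x hxk
      obtain rfl : t' = t := by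
        by_contra h
        exact hS.disjoint t' ht' t ht h hxt' hxt
      exact hM (Finset.mem_insert_self _ M) (Finset.mem_insert_of_mem hf)
        (fun h => heM (h ▸ hf)) t'.1 hte ht'f
    obtain ⟨hκ, hS''⟩ := hS.insert_merge hS' hp hr hadj fun k hk =>
      ⟨hfresh p hp (Sym2.mem_mk_left _ _) k hk, hfresh r hr (Sym2.mem_mk_right _ _) k hk⟩
    refine ⟨_, _, ?_, hS'', ?_, ?_⟩
    · rw [Finset.card_insert_of_notMem hκ, Finset.card_insert_of_notMem heM, hcard]
    · intro k hk
      rcases Finset.mem_insert.mp hk with rfl | hk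
      · exact ⟨hpU, hrU'⟩
      · exact hends k hk
    · intro k hk x hx
      rcases Finset.mem_insert.mp hk with rfl | hk
      · rw [Function.update_self, List.mem_append, List.mem_reverse] at hx
        rcases hx with hx | hx
        · exact ⟨p, hp, ⟨_, Finset.mem_insert_self _ M, Sym2.mem_mk_left _ _⟩, hx⟩
        · exact ⟨r, hr, ⟨_, Finset.mem_insert_self _ M, Sym2.mem_mk_right _ _⟩, hx⟩
      · rw [Function.update_of_ne (by rintro rfl; exact hκ hk)] at hx
        obtain ⟨t, ht, ⟨f, hf, htf⟩, hxt⟩ := hused k hk x hx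
        exact ⟨t, ht, ⟨f, Finset.mem_insert_of_mem hf, htf⟩, hxt⟩

end IsPathFamily

end Paths

theorem exists_doubling_count {q Q L k : ℕ} (hqQ : q + 1 ≤ Q) (hkQ : k ≤ Q) (hLQ : L ^ 2 ≤ Q)
    (hLk : 64 * Q ≤ L * k) :
    ∃ m, m ≤ Q ∧ 64 * Q ≤ L ^ 2 * m ∧ m * (q + 1 + 2 * k) ≤ k.choose 2 := by
  have hQ : 0 < 64 * Q := by omega
  obtain ⟨m, hm_lower, hm_upper⟩ : ∃ m, k ^ 2 < 64 * Q * m ∧ 64 * Q * m ≤ k ^ 2 + 64 * Q :=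
    ⟨k ^ 2 / (64 * Q) + 1, by rw [mul_add, mul_one]; exact Nat.lt_mul_div_succ _ hQ,
      by rw [mul_add, mul_one]; exact Nat.add_le_add_right (Nat.mul_div_le _ _) _⟩
  have hLk2 : 64 * Q * (64 * Q) ≤ L ^ 2 * k ^ 2 := by
    rw [← mul_pow]; nlinarith
  have hk2 : 4096 * Q ≤ k ^ 2 := by nlinarith
  refine ⟨m, by nlinarith, ?_, ?_⟩
  · have : 64 * Q * (64 * Q) ≤ 64 * Q * (L ^ 2 * m) := by nlinarith
    exact Nat.le_of_mul_le_mul_left this hQ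
  · rw [Nat.choose_two_right, Nat.le_div_iff_mul_le two_pos]
    have hk : 64 ≤ k := by nlinarith
    have hk1 : k * (k - 1) + k = k ^ 2 := by
      obtain ⟨j, rfl⟩ := Nat.exists_eq_add_of_le' (show 1 ≤ k by omega)
      simp only [Nat.add_sub_cancel]; ring
    nlinarith

section Strategy

variable {V : Type*} [DecidableEq V] {q : ℕ}

def HasFreeEndedPaths (m v : ℕ) (F C : Finset (Sym2 V)) : Prop :=
  ∃ S W, S.card = m ∧ IsPathFamily (clientGraph C) S W v ∧ EndsFree F S

def HasClientPath (ℓ : ℕ) (C : Finset (Sym2 V)) : Prop :=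
  ∃ (a b : V) (w : (clientGraph C).Walk a b), w.IsPath ∧ ℓ ≤ w.support.length

theorem waiterCanReach_merge_paths {F C G : Finset (Sym2 V)} {S : Finset (V × V)}
    {W : V × V → List V} {H U U' : Finset V} {m v : ℕ}
    (hS : IsPathFamily (clientGraph C) S W v) (hGH : ∀ e ∈ G, ∀ x ∈ e, x ∈ H) (hGF : G ⊆ F)
    (hGS : ∀ e ∈ G, ∃ p ∈ S, ∃ r ∈ S, p.1 ≠ r.1 ∧ p.2 ∈ U ∧ r.2 ∈ U' ∧ e = s(p.1, r.1))
    (hU : ∀ a ∈ U, ∀ b ∈ U, a ≠ b → s(a, b) ∈ F \ G)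
    (hU' : ∀ a ∈ U', ∀ b ∈ U', a ≠ b → s(a, b) ∈ F \ G)
    (hm : m * (q + 1 + 2 * H.card) ≤ G.card) :
    WaiterCanReach q (HasFreeEndedPaths m (2 * v)) F C := by
  refine (waiterCanReach_vertexDisjoint m hGH hGF hm).mono ?_
  rintro F' C' ⟨hF', hC', M, hMG, hMC', rfl, hM⟩
  obtain ⟨S', W', hcard, hS', hends⟩ :=
    (hS.mono (clientGraph_mono hC')).exists_merge (U := U) (U' := U') hM fun e he => by
      obtain ⟨p, hp, r, hr, hpr, hpU, hrU', rfl⟩ := hGS e (hMG he)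
      exact ⟨p, hp, r, hr, (fromEdgeSet_adj _).mpr ⟨hMC' he, hpr⟩, hpU, hrU', rfl⟩
  exact ⟨S', W', hcard, hS', hS'.endsFree hends (fun a ha b hb hab => hF' (hU a ha b hb hab))
    (fun a ha b hb hab => hF' (hU' a ha b hb hab))⟩

theorem waiterCanReach_double_length {F C : Finset (Sym2 V)} {k m v : ℕ} (hv : 2 ≤ v)
    (h : HasFreeEndedPaths k v F C) (hm : m * (q + 1 + 2 * k) ≤ k.choose 2) :
    WaiterCanReach q (HasFreeEndedPaths m (2 * v)) F C := by
  obtain ⟨S, W, rfl, hS, hF⟩ := h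
  -- Waiter offers edges between heads only, so the pairs of tails stay free
  set heads := S.image Prod.fst
  set tails := S.image Prod.snd
  have hpool : ∀ e ∈ heads.offDiag.image Sym2.mk.uncurry,
      ∃ p ∈ S, ∃ r ∈ S, p ≠ r ∧ e = s(p.1, r.1) := by
    intro e he
    obtain ⟨⟨a, b⟩, hab, rfl⟩ := Finset.mem_image.mp he
    obtain ⟨ha, hb, hab⟩ := Finset.mem_offDiag.mp hab
    obtain ⟨p, hp, rfl⟩ := Finset.mem_image.mp ha
    obtain ⟨r, hr, rfl⟩ := Finset.mem_image.mp hb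
    exact ⟨p, hp, r, hr, fun h => hab (h ▸ rfl), rfl⟩
  have htails : ∀ a ∈ tails, ∀ b ∈ tails, a ≠ b →
      s(a, b) ∈ F \ heads.offDiag.image Sym2.mk.uncurry := by
    intro a ha b hb hab
    obtain ⟨p, hp, rfl⟩ := Finset.mem_image.mp ha
    obtain ⟨r, hr, rfl⟩ := Finset.mem_image.mp hb
    refine Finset.mem_sdiff.mpr ⟨(hF p hp r hr fun h => hab (h ▸ rfl)).2, fun he => ?_⟩
    obtain ⟨p', hp', r', hr', -, he⟩ := hpool _ he
    rcases Sym2.eq_iff.mp he with ⟨h, -⟩ | ⟨h, -⟩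
    · exact hS.fst_ne_snd hv hp' hp h.symm
    · exact hS.fst_ne_snd hv hr' hp h.symm
  refine waiterCanReach_merge_paths hS (H := heads) ?_ ?_ ?_ htails htails ?_
  · intro e he x hx
    obtain ⟨p, hp, r, hr, -, rfl⟩ := hpool e he
    rcases Sym2.mem_iff.mp hx with rfl | rfl
    · exact Finset.mem_image_of_mem _ hp
    · exact Finset.mem_image_of_mem _ hr
  · intro e he
    obtain ⟨p, hp, r, hr, hpr, rfl⟩ := hpool e he
    exact (hF p hp r hr hpr).1
  · intro e he
    obtain ⟨p, hp, r, hr, hpr, rfl⟩ := hpool e he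
    exact ⟨p, hp, r, hr, fun h => hpr (hS.eq_of_fst_eq hp hr h),
      Finset.mem_image_of_mem _ hp, Finset.mem_image_of_mem _ hr, rfl⟩
  · rwa [Sym2.card_image_offDiag,
      Finset.card_image_of_injOn fun p hp r hr => hS.eq_of_fst_eq hp hr]

theorem card_image_product_sym2 {X Y : Finset V} (hXY : Disjoint X Y) :
    ((X ×ˢ Y).image Sym2.mk.uncurry).card = X.card * Y.card := by
  rw [Finset.card_image_of_injOn, Finset.card_product]
  rintro ⟨x, y⟩ hxy ⟨x', y'⟩ hxy' h
  simp only [Finset.coe_product, Set.mem_prod, Finset.mem_coe] at hxy hxy'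
  rcases Sym2.eq_iff.mp h with ⟨rfl, rfl⟩ | ⟨rfl, rfl⟩
  · rfl
  · exact absurd hxy'.2 (Finset.disjoint_left.mp hXY hxy.1)

theorem waiterCanReach_edges_between {F C : Finset (Sym2 V)} {X Y : Finset V} {m : ℕ}
    (hXY : Disjoint X Y) (hF : ∀ a ∈ X ∪ Y, ∀ b ∈ X ∪ Y, a ≠ b → s(a, b) ∈ F)
    (hm : m * (q + 1 + 2 * (X.card + Y.card)) ≤ X.card * Y.card) :
    WaiterCanReach q (HasFreeEndedPaths m 2) F C := by
  have hpool : ∀ e ∈ (X ×ˢ Y).image Sym2.mk.uncurry, ∃ x ∈ X, ∃ y ∈ Y, e = s(x, y) := by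
    intro e he
    obtain ⟨⟨x, y⟩, hxy, rfl⟩ := Finset.mem_image.mp he
    obtain ⟨hx, hy⟩ := Finset.mem_product.mp hxy
    exact ⟨x, hx, y, hy, rfl⟩
  have hXY' : ∀ z ∈ X, z ∈ Y → False := fun z hz => Finset.disjoint_left.mp hXY hz
  have hne : ∀ x ∈ X, ∀ y ∈ Y, x ≠ y := fun x hx y hy h => hXY' x hx (h ▸ hy)
  have hfree : ∀ a b, a ≠ b → (a ∈ X ∧ b ∈ X) ∨ (a ∈ Y ∧ b ∈ Y) →
      s(a, b) ∈ F \ (X ×ˢ Y).image Sym2.mk.uncurry := by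
    intro a b hab hside
    refine Finset.mem_sdiff.mpr ⟨hF a (by simp; tauto) b (by simp; tauto) hab, fun he => ?_⟩
    obtain ⟨x, hx, y, hy, hexy⟩ := hpool _ he
    rcases Sym2.eq_iff.mp hexy with ⟨rfl, rfl⟩ | ⟨rfl, rfl⟩
    · rcases hside with ⟨-, h⟩ | ⟨h, -⟩
      exacts [hXY' _ h hy, hXY' _ hx h]
    · rcases hside with ⟨h, -⟩ | ⟨-, h⟩
      exacts [hXY' _ h hy, hXY' _ hx h]
  refine waiterCanReach_merge_paths (IsPathFamily.singletons (X ∪ Y)) (H := X ∪ Y) ?_ ?_ ?_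
    (fun a ha b hb hab => hfree a b hab (.inl ⟨ha, hb⟩))
    (fun a ha b hb hab => hfree a b hab (.inr ⟨ha, hb⟩)) ?_
  · intro e he z hz
    obtain ⟨x, hx, y, hy, rfl⟩ := hpool e he
    rcases Sym2.mem_iff.mp hz with rfl | rfl
    · exact Finset.mem_union_left _ hx
    · exact Finset.mem_union_right _ hy
  · intro e he
    obtain ⟨x, hx, y, hy, rfl⟩ := hpool e he
    exact hF x (Finset.mem_union_left _ hx) y (Finset.mem_union_right _ hy) (hne x hx y hy)
  · intro e he
    obtain ⟨x, hx, y, hy, rfl⟩ := hpool e he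
    exact ⟨(x, x), Finset.mem_image_of_mem _ (Finset.mem_union_left _ hx),
      (y, y), Finset.mem_image_of_mem _ (Finset.mem_union_right _ hy), hne x hx y hy, hx, hy, rfl⟩
  · rwa [Finset.card_union_of_disjoint hXY, card_image_product_sym2 hXY]

theorem waiterCanReach_clientPath_of_paths {Q L k v : ℕ} {F C : Finset (Sym2 V)} (t : ℕ)
    (hqQ : q + 1 ≤ Q) (hv : 2 ≤ v) (hkQ : k ≤ Q) (hLQ : L ^ 2 ^ t ≤ Q) (hLk : 64 * Q ≤ L * k)
    (h : HasFreeEndedPaths k v F C) :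
    WaiterCanReach q (fun _ C' => HasClientPath (v * 2 ^ t) C') F C := by
  induction t generalizing L k v F C with
  | zero =>
    obtain ⟨S, W, rfl, hS, -⟩ := h
    obtain ⟨p, hp⟩ : S.Nonempty := Finset.card_pos.mp (by rw [pow_zero, pow_one] at hLQ; nlinarith)
    obtain ⟨w, hw, hwp⟩ := hS.isPathList p hp
    exact .reached ⟨p.1, p.2, w, hw, by simpa [hwp] using hS.le_length p hp⟩
  | succ t ih =>
    have hL2 : (L ^ 2) ^ 2 ^ t ≤ Q := by rwa [← pow_mul, ← pow_succ']
    obtain ⟨m, hmQ, hLm, hm⟩ := exists_doubling_count hqQ hkQ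
      ((Nat.le_self_pow (by positivity) _).trans hL2) hLk
    refine (waiterCanReach_double_length hv h hm).bind fun F' C' h' => ?_
    refine (ih (by omega) hmQ hL2 hLm h').mono fun _ C'' hC'' => ?_
    rwa [pow_succ', ← mul_assoc, mul_comm v 2]

theorem waiterCanReach_clientPath_of_card [Fintype V] {h Q k L T : ℕ}
    (hV : 2 * h ≤ Fintype.card V) (hqQ : q + 1 ≤ Q) (hk : k * (q + 1 + 4 * h) ≤ h * h)
    (hkQ : k ≤ Q) (hLQ : L ^ 2 ^ T ≤ Q) (hLk : 64 * Q ≤ L * k) :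
    WaiterCanReach q (fun _ C => HasClientPath (2 * 2 ^ T) C)
      (Finset.univ.filter fun e : Sym2 V => ¬ e.IsDiag) ∅ := by
  obtain ⟨X, -, hX⟩ := Finset.exists_subset_card_eq (s := (Finset.univ : Finset V)) (n := h)
    (by rw [Finset.card_univ]; omega)
  obtain ⟨Y, hYX, hY⟩ := Finset.exists_subset_card_eq (s := (Finset.univ : Finset V) \ X) (n := h)
    (by rw [Finset.card_sdiff_of_subset (Finset.subset_univ X), Finset.card_univ]; omega)
  have hXY : Disjoint X Y := Finset.disjoint_of_subset_right hYX Finset.disjoint_sdiff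
  refine (waiterCanReach_edges_between (m := k) hXY (fun a _ b _ hab => ?_) ?_).bind
    fun F C hFC => waiterCanReach_clientPath_of_paths T hqQ le_rfl hkQ hLQ hLk hFC
  · simpa using hab
  · rw [hX, hY]; linarith

end Strategy

theorem exists_initial_count {q Q h a L : ℕ} (hqQ : q + 1 ≤ Q) (hhQ : h ≤ Q) (hQ : Q ≤ a * h)
    (haL : 1024 * a ^ 2 ≤ L) (ha : 16 * a ≤ h) :
    ∃ k, k * (q + 1 + 4 * h) ≤ h * h ∧ k ≤ Q ∧ 64 * Q ≤ L * k := by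
  have hQ0 : 0 < 8 * Q := by omega
  obtain ⟨k, hk_upper, hk_lower⟩ : ∃ k, 8 * Q * k ≤ h * h ∧ h * h < 8 * Q * (k + 1) :=
    ⟨h * h / (8 * Q), Nat.mul_div_le _ _, Nat.lt_mul_div_succ _ hQ0⟩
  refine ⟨k, by nlinarith, by nlinarith, ?_⟩
  have hh : h * h < 16 * Q * k := by nlinarith
  have : 8 * Q * (64 * Q) ≤ 8 * Q * (L * k) := by nlinarith
  exact Nat.le_of_mul_le_mul_left this hQ0

theorem exists_bias_le_mul_half (c : ℝ) :
    ∃ a : ℕ, 0 < a ∧ ∀ n q : ℕ, 2 ≤ n → (q : ℝ) ≤ c * n → q + 1 ≤ a * (n / 2) := by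
  refine ⟨3 * ⌈c⌉₊ + 1, by omega, fun n q hn hqc => ?_⟩
  have hqn : q ≤ ⌈c⌉₊ * n := by
    exact_mod_cast hqc.trans (mul_le_mul_of_nonneg_right (Nat.le_ceil c) (Nat.cast_nonneg n))
  have hn2 : n ≤ 2 * (n / 2) + 1 := by omega
  have hn1 : 1 ≤ n / 2 := by omega
  nlinarith

theorem exists_pow_two_pow_le_lt {L h : ℕ} (hL : 2 ≤ L) (hLh : L ≤ h) :
    ∃ T, L ^ 2 ^ T ≤ h ∧ h < L ^ 2 ^ (T + 1) := by
  have hlog : Nat.log L h ≠ 0 := (Nat.log_pos hL hLh).ne'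
  refine ⟨Nat.log 2 (Nat.log L h), ?_, ?_⟩
  · exact (Nat.pow_le_pow_right (by omega) (Nat.pow_log_le_self 2 hlog)).trans
      (Nat.pow_log_le_self L (by omega))
  · exact (Nat.lt_pow_succ_log_self hL h).trans_le
      (Nat.pow_le_pow_right (by omega) (Nat.lt_pow_succ_log_self one_lt_two _))

theorem log_div_le_of_half_lt_pow {n L T : ℕ} (hn : 6 ≤ n) (hL : 2 ≤ L)
    (h : n / 2 < L ^ 2 ^ (T + 1)) : Real.log n / (2 * Real.log L) ≤ 2 * 2 ^ T := by
  have hlogL : 0 < Real.log L := Real.log_pos (by exact_mod_cast hL)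
  have hnL : n ≤ L ^ (4 * 2 ^ T) :=
    calc n ≤ n / 2 * (n / 2) := by
          have : n ≤ 2 * (n / 2) + 1 := by omega
          have : 3 ≤ n / 2 := by omega
          nlinarith
      _ ≤ L ^ 2 ^ (T + 1) * L ^ 2 ^ (T + 1) := Nat.mul_le_mul h.le h.le
      _ = L ^ (4 * 2 ^ T) := by ring
  have hlog : Real.log n ≤ 4 * 2 ^ T * Real.log L := by
    calc Real.log n ≤ Real.log ((L : ℝ) ^ (4 * 2 ^ T)) :=
          Real.log_le_log (by exact_mod_cast (by omega : 0 < n)) (by exact_mod_cast hnL)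
      _ = 4 * 2 ^ T * Real.log L := by rw [Real.log_pow]; push_cast; ring
  rw [div_le_iff₀ (by positivity)]
  linarith

/-- For every constant `c > 0` there is a constant `c' > 0` such that for all
sufficiently large `n` and every positive integer `q ≤ c * n`, in the `(q : 1)` Waiter-Client
game on `E(K_n)` Waiter has a strategy ensuring that Client's final graph contains a path on
at least `c' * ln n` vertices. -/
theorem statement1 :
    ∀ c : ℝ, 0 < c → ∃ c' : ℝ, 0 < c' ∧ ∃ N : ℕ, ∀ n : ℕ, N ≤ n →
      ∀ q : ℕ, 0 < q → (q : ℝ) ≤ c * n →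
        WaiterCanForce q
          (fun C : Finset (Sym2 (Fin n)) =>
            ∃ (u v : Fin n) (p : (clientGraph C).Walk u v),
              p.IsPath ∧ c' * Real.log n ≤ (p.support.length : ℝ))
          (knBoard n) ∅ := by
  intro c _
  obtain ⟨a, ha, hqa⟩ := exists_bias_le_mul_half c
  obtain ⟨L, haL, hL⟩ : ∃ L : ℕ, 1024 * a ^ 2 ≤ L ∧ 16 * a ≤ L :=
    ⟨1024 * a ^ 2, le_rfl, by nlinarith⟩
  have hlogL : 0 < Real.log L := Real.log_pos (by exact_mod_cast (by omega : 1 < L))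
  refine ⟨1 / (2 * Real.log L), by positivity, 2 * L + 2, fun n hn q _ hqc => ?_⟩
  obtain ⟨k, hk, hkQ, hLk⟩ := exists_initial_count (le_max_left _ _) (le_max_right _ _)
    (max_le (hqa n q (by omega) hqc) (Nat.le_mul_of_pos_left _ ha)) haL (by omega)
  obtain ⟨T, hLT, hhT⟩ := exists_pow_two_pow_le_lt (L := L) (h := n / 2) (by omega) (by omega)
  have hreach := waiterCanReach_clientPath_of_card (V := Fin n) (by simp; omega)
    (le_max_left _ _) hk hkQ (hLT.trans (le_max_right _ _)) hLk
  refine (hreach.mono fun _ C hC => ?_).waiterCanForce fun C₁ C₂ hC hP =>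
    exists_isPath_of_le (clientGraph_mono hC) (φ := fun ℓ => _ ≤ (ℓ : ℝ)) hP
  obtain ⟨u, v, w, hw, hlen⟩ := hC
  refine ⟨u, v, w, hw, ?_⟩
  calc 1 / (2 * Real.log L) * Real.log n = Real.log n / (2 * Real.log L) := by ring
    _ ≤ 2 * 2 ^ T := log_div_le_of_half_lt_pow (by omega) (by omega) hhT
    _ ≤ _ := by exact_mod_cast hlen
end

section
/- For all positive integers ℓ and k with k > 2ℓ, the number of spanning trees of the complete graph K_k (on a fixed labeled vertex set of size k) that have at most ℓ leaves is strictly less than (e·k)^{2ℓ} · k! / (2ℓ)!. -/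
/-!
Root every tree at a vertex `r` and record the parent of each other vertex. This map
`{v // v ≠ r} → V` determines the tree, and a vertex outside its image has no children, hence is
a leaf; so a tree on `k` vertices with at most `ℓ` leaves yields a map whose image has at least
`k - ℓ` elements. Such a map is injective on some `(k - ℓ)`-subset of its domain, so there are at
most `C(k-1, ℓ-1) · k!/ℓ! · k^(ℓ-1)` of them. The estimates `C(k-1, ℓ-1) (ℓ-1)! ≤ k^(ℓ-1)`,
`(2ℓ)! ≤ ℓ · 4^ℓ · (ℓ-1)! · ℓ!`, `ℓ < k²` and `2 ≤ e` give the bound.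
-/

open Finset

namespace SimpleGraph

variable {V : Type*} {G H : SimpleGraph V} {r a b v : V}

open scoped Classical in
/-- The fallback value `v` is junk: it is used only when `r` is unreachable from `v`. -/
noncomputable def parent (G : SimpleGraph V) (r v : V) : V :=
  if h : Nonempty (G.Path v r) then (h.some : G.Walk v r).snd else v

theorem IsAcyclic.parent_eq_snd (hG : G.IsAcyclic) {p : G.Walk v r} (hp : p.IsPath) :
    G.parent r v = p.snd := by
  have h : Nonempty (G.Path v r) := ⟨⟨p, hp⟩⟩
  rw [parent, dif_pos h, (hG.subsingleton_path v r).elim h.some ⟨p, hp⟩]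

theorem IsAcyclic.parent_self (hG : G.IsAcyclic) : G.parent r r = r := by
  simpa using hG.parent_eq_snd (Walk.IsPath.nil (G := G) (u := r))

theorem Connected.adj_parent (hG : G.Connected) (hv : v ≠ r) : G.Adj v (G.parent r v) := by
  classical
  obtain ⟨p⟩ := hG.preconnected v r
  have h : Nonempty (G.Path v r) := ⟨p.toPath⟩
  rw [parent, dif_pos h]
  exact Walk.adj_snd (Walk.not_nil_of_ne hv)

theorem IsTree.parent_eq_or_parent_eq_of_adj (hT : G.IsTree) (h : G.Adj a b) :
    G.parent r a = b ∨ G.parent r b = a := by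
  classical
  obtain ⟨p, hp, -⟩ := hT.existsUnique_path b r
  by_cases ha : a ∈ p.support
  · right
    have hedge : p.takeUntil a ha = Walk.cons h.symm Walk.nil :=
      congrArg Subtype.val <| (hT.isAcyclic.subsingleton_path b a).elim ⟨_, hp.takeUntil ha⟩
        ⟨_, by simp [h.ne']⟩
    rw [hT.isAcyclic.parent_eq_snd hp, ← p.take_spec ha, hedge]
    simp
  · left
    rw [hT.isAcyclic.parent_eq_snd (p := Walk.cons h p) (hp.cons ha)]
    simp

theorem IsTree.adj_iff_parent (hT : G.IsTree) :
    G.Adj a b ↔ (a ≠ r ∧ G.parent r a = b) ∨ (b ≠ r ∧ G.parent r b = a) := by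
  refine ⟨fun h => ?_, ?_⟩
  · have root_ne {x y : V} (hxy : G.Adj x y) (hpar : G.parent r x = y) : x ≠ r := by
      rintro rfl
      exact hxy.ne (hT.isAcyclic.parent_self.symm.trans hpar)
    rcases hT.parent_eq_or_parent_eq_of_adj h with hab | hba
    · exact .inl ⟨root_ne h hab, hab⟩
    · exact .inr ⟨root_ne h.symm hba, hba⟩
  · rintro (⟨ha, rfl⟩ | ⟨hb, rfl⟩)
    · exact hT.1.adj_parent ha
    · exact (hT.1.adj_parent hb).symm

theorem IsTree.ext_of_parent_eq (hG : G.IsTree) (hH : H.IsTree)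
    (h : ∀ v, v ≠ r → G.parent r v = H.parent r v) : G = H := by
  ext a b
  rw [hG.adj_iff_parent (r := r), hH.adj_iff_parent (r := r)]
  constructor <;> rintro (⟨ha, hab⟩ | ⟨hb, hba⟩) <;> simp_all

theorem IsTree.ncard_neighborSet_eq_one [Nontrivial V] (hT : G.IsTree)
    (hv : ∀ w, w ≠ r → G.parent r w ≠ v) : (G.neighborSet v).ncard = 1 := by
  obtain ⟨u, hu⟩ := hT.1.preconnected.exists_adj_of_nontrivial v
  have parent_eq {w : V} (hw : G.Adj v w) : G.parent r v = w := by
    rcases hT.adj_iff_parent.1 hw with ⟨-, h⟩ | ⟨hwr, h⟩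
    exacts [h, absurd h (hv w hwr)]
  rw [Set.ncard_eq_one]
  exact ⟨u, Set.ext fun w => ⟨fun hw => (parent_eq hw).symm.trans (parent_eq hu),
    fun hw => hw ▸ hu⟩⟩

theorem IsTree.card_sub_ncard_leaves_le [Fintype V] [DecidableEq V] [Nontrivial V]
    (hT : G.IsTree) (r : V) :
    Fintype.card V - {v | (G.neighborSet v).ncard = 1}.ncard ≤
      #(univ.image fun w : {w // w ≠ r} => G.parent r w) := by
  have hmissed : (↑(univ \ univ.image fun w : {w // w ≠ r} => G.parent r w) : Set V) ⊆
      {v | (G.neighborSet v).ncard = 1} := by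
    intro v hv
    simp only [coe_sdiff, coe_univ, coe_image, Set.mem_sdiff, Set.mem_univ, Set.mem_image,
      true_and, not_exists, Subtype.forall] at hv
    exact hT.ncard_neighborSet_eq_one fun w hw => hv w hw
  have := Set.ncard_le_ncard hmissed
  rw [Set.ncard_coe_finset, card_univ_sdiff] at this
  omega

theorem ncard_trees_with_few_leaves_le [Fintype V] [DecidableEq V] [Nontrivial V] (r : V)
    (ℓ : ℕ) :
    {G : SimpleGraph V | G.Connected ∧ G.IsAcyclic ∧
        {v | (G.neighborSet v).ncard = 1}.ncard ≤ ℓ}.ncard ≤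
      #{f : {v // v ≠ r} → V | Fintype.card V - ℓ ≤ #(univ.image f)} := by
  rw [← Set.ncard_coe_finset]
  refine Set.ncard_le_ncard_of_injOn (fun G (v : {v // v ≠ r}) => G.parent r v) ?_ ?_
    (Set.toFinite _)
  · rintro G ⟨hconn, hacyc, hleaves⟩
    have := IsTree.card_sub_ncard_leaves_le ⟨hconn, hacyc⟩ r
    simp only [coe_filter, mem_univ, true_and, Set.mem_ofPred_eq]
    omega
  · rintro G ⟨hGc, hGa, -⟩ H ⟨hHc, hHa, -⟩ h
    exact IsTree.ext_of_parent_eq ⟨hGc, hGa⟩ ⟨hHc, hHa⟩ fun v hv => congrFun h ⟨v, hv⟩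

end SimpleGraph

section FunctionCount

variable {α β : Type*} [Fintype α] [DecidableEq α] [Fintype β] [DecidableEq β]

theorem card_filter_injOn (s : Finset α) :
    #{f : α → β | Set.InjOn f (s : Set α)} =
      (Fintype.card β).descFactorial #s * Fintype.card β ^ (Fintype.card α - #s) := by
  rw [← Fintype.card_subtype]
  let e : {f : α → β // Set.InjOn f (s : Set α)} ≃ (s ↪ β) × ({a // a ∉ s} → β) :=
    ((Equiv.piEquivPiSubtypeProd (· ∈ s) fun _ => β).subtypeEquiv
      (p := fun f => Set.InjOn f (s : Set α)) (q := fun g => Function.Injective g.1)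
      fun f => Set.injOn_iff_injective).trans <|
      Equiv.prodSubtypeFstEquivSubtypeProd.trans <|
        (Equiv.subtypeInjectiveEquivEmbedding _ _).prodCongr (Equiv.refl _)
  rw [Fintype.card_congr e, Fintype.card_prod, Fintype.card_embedding_eq, Fintype.card_fun,
    Fintype.card_subtype_compl, Fintype.card_coe]

theorem card_filter_le_card_image_le (n : ℕ) :
    #{f : α → β | n ≤ #(univ.image f)} ≤ (Fintype.card α).choose n *
      ((Fintype.card β).descFactorial n * Fintype.card β ^ (Fintype.card α - n)) := by
  have hcover : ({f : α → β | n ≤ #(univ.image f)} : Finset _) ⊆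
      (powersetCard n univ).biUnion fun s : Finset α =>
        {f : α → β | Set.InjOn f (s : Set α)} := by
    intro f hf
    obtain ⟨u, -, hinj, himg⟩ := exists_subset_injOn_image_eq_of_surjOn (f := f) Set.univ
      (univ.image f) (by intro y; simp)
    have hn : n ≤ #u := by
      rw [← card_image_of_injOn hinj, himg]
      exact (mem_filter.1 hf).2
    obtain ⟨s, hsu, hs⟩ := exists_subset_card_eq hn
    rw [mem_biUnion]
    refine ⟨s, mem_powersetCard.2 ⟨subset_univ s, hs⟩, mem_filter.2 ⟨mem_univ _, hinj.mono ?_⟩⟩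
    exact_mod_cast hsu
  calc #{f : α → β | n ≤ #(univ.image f)}
      ≤ ∑ s ∈ powersetCard n (univ : Finset α), #{f : α → β | Set.InjOn f (s : Set α)} :=
        (card_le_card hcover).trans card_biUnion_le
    _ = _ := by
      rw [sum_congr rfl fun s hs => by rw [card_filter_injOn, (mem_powersetCard.1 hs).2],
        sum_const, card_powersetCard, card_univ, smul_eq_mul]

end FunctionCount

open Nat in
theorem choose_mul_descFactorial_mul_pow_mul_factorial_lt {ℓ k : ℕ} (hℓ : 0 < ℓ) (hk : ℓ < k) :
    (k - 1).choose (k - ℓ) * (k.descFactorial (k - ℓ) * k ^ (k - 1 - (k - ℓ))) * (2 * ℓ)! <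
      (2 * k) ^ (2 * ℓ) * k ! := by
  obtain ⟨m, rfl⟩ : ∃ m, ℓ = m + 1 := ⟨ℓ - 1, by omega⟩
  have hsymm : k - 1 - (k - (m + 1)) = m := by omega
  have hchoose_symm : (k - 1).choose (k - (m + 1)) = (k - 1).choose m := by
    rw [← choose_symm (by omega : k - (m + 1) ≤ k - 1), hsymm]
  rw [hsymm, hchoose_symm]
  have hchoose : (k - 1).choose m * m ! ≤ k ^ m := by
    rw [mul_comm, ← descFactorial_eq_factorial_mul_choose]
    exact (descFactorial_le_pow _ _).trans (Nat.pow_le_pow_left (Nat.sub_le k 1) m)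
  have hdesc : k.descFactorial (k - (m + 1)) * (m + 1)! = k ! := by
    rw [mul_comm, ← factorial_mul_descFactorial (Nat.sub_le k (m + 1)), Nat.sub_sub_self hk.le]
  have hcentral : (2 * (m + 1))! = (m + 1) * centralBinom (m + 1) * m ! * (m + 1)! := by
    have h := choose_mul_factorial_mul_factorial (by omega : m + 1 ≤ 2 * (m + 1))
    rw [show 2 * (m + 1) - (m + 1) = m + 1 by omega] at h
    rw [← h, centralBinom_eq_two_mul_choose, factorial_succ m]
    ring
  have hsmall : (m + 1) * centralBinom (m + 1) < k ^ 2 * 4 ^ (m + 1) :=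
    Nat.mul_lt_mul_of_lt_of_le (by nlinarith) (centralBinom_le_four_pow _) (by positivity)
  have hk0 : 0 < k := by omega
  calc (k - 1).choose m * (k.descFactorial (k - (m + 1)) * k ^ m) * (2 * (m + 1))!
      = ((k - 1).choose m * m !) * (k.descFactorial (k - (m + 1)) * (m + 1)!) * k ^ m *
          ((m + 1) * centralBinom (m + 1)) := by rw [hcentral]; ring
    _ ≤ k ^ m * k ! * k ^ m * ((m + 1) * centralBinom (m + 1)) := by
      rw [hdesc]
      gcongr
    _ < k ^ m * k ! * k ^ m * (k ^ 2 * 4 ^ (m + 1)) :=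
      Nat.mul_lt_mul_of_pos_left hsmall (by positivity)
    _ = (2 * k) ^ (2 * (m + 1)) * k ! := by rw [pow_mul]; ring

/-- For positive integers `ℓ` and `k` with `k > 2ℓ`, the number of labeled
spanning trees of `K_k` (i.e. tree graphs on the vertex set `Fin k`) with at most `ℓ` leaves
is strictly less than `(e k)^{2ℓ} k! / (2ℓ)!`. -/
theorem statement7 (ℓ k : ℕ) (hℓ : 0 < ℓ) (hk : 2 * ℓ < k) :
    (({G : SimpleGraph (Fin k) | G.Connected ∧ G.IsAcyclic ∧
        {v : Fin k | (G.neighborSet v).ncard = 1}.ncard ≤ ℓ}.ncard : ℝ) <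
      (Real.exp 1 * k) ^ (2 * ℓ) * (Nat.factorial k) / (Nat.factorial (2 * ℓ))) := by
  have : Nontrivial (Fin k) := Fin.nontrivial_iff_two_le.2 (by omega)
  have hcount := (SimpleGraph.ncard_trees_with_few_leaves_le (⟨0, by omega⟩ : Fin k) ℓ).trans
    (card_filter_le_card_image_le _)
  simp only [Fintype.card_fin, Fintype.card_subtype_compl, Fintype.card_unique] at hcount
  have hnat := choose_mul_descFactorial_mul_pow_mul_factorial_lt hℓ (by omega : ℓ < k)
  have htwo_le_exp : (2 : ℝ) ≤ Real.exp 1 := by linarith [Real.add_one_le_exp 1]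
  rw [lt_div_iff₀ (by positivity)]
  calc _ ≤ (((k - 1).choose (k - ℓ) * (k.descFactorial (k - ℓ) * k ^ (k - 1 - (k - ℓ))) : ℕ)
        : ℝ) * (2 * ℓ).factorial :=
        mul_le_mul_of_nonneg_right (by exact_mod_cast hcount) (by positivity)
    _ < ((2 * k) ^ (2 * ℓ) * k.factorial : ℕ) := by exact_mod_cast hnat
    _ ≤ (Real.exp 1 * k) ^ (2 * ℓ) * k.factorial := by push_cast; gcongr
end

section
/- Let T be a tree on m ≥ 3 vertices and let r be a positive integer. Then the number of ordered r-tuples (P_1, …, P_r) of (not necessarily distinct) non-trivial paths of T such that the union P_1 ∪ ⋯ ∪ P_r is a subtree of T (i.e., the subgraph whose vertex set is the union of the vertex sets and whose edge set is the union of the edge sets is connected) is at least (m/4)^{2r}. -/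
/-!
Let `v` be a median of the tree, a vertex minimising `∑ y, dist v y`. Each branch of `T - v` then
holds at most half of the `m` vertices, and an ordered pair whose path avoids `v` lies in a single
branch, so at most `(m - 1) m / 2` ordered pairs avoid `v`. Hence at least `m (m - 1) / 2` pairs
of distinct vertices are joined through `v`, and since a path determines its ends up to order,
at least `m (m - 1) / 4 ≥ (m / 4) ^ 2` non-trivial paths pass through `v`. Any `r` of them have
a connected union.
-/

open Finset

namespace SimpleGraph

variable {V : Type*} {T : SimpleGraph V}

def Subgraph.IsNontrivialPath (H : T.Subgraph) : Prop :=
  ∃ (u v : V) (p : T.Walk u v), p.IsPath ∧ 0 < p.length ∧ H = p.toSubgraph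

lemma Subgraph.connected_iSup_of_forall_mem_verts {ι : Type*} [Nonempty ι] {f : ι → T.Subgraph}
    {v : V} (hf : ∀ i, (f i).Connected) (hv : ∀ i, v ∈ (f i).verts) : (⨆ i, f i).Connected := by
  rw [Subgraph.connected_iff', connected_iff_exists_forall_reachable]
  have hsup : ∀ u, u ∈ (⨆ i, f i).verts ↔ ∃ i, u ∈ (f i).verts := by simp
  refine ⟨⟨v, (hsup v).2 ⟨Classical.arbitrary ι, hv _⟩⟩, ?_⟩
  rintro ⟨u, hu⟩
  obtain ⟨i, hi⟩ := (hsup u).1 hu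
  exact ((hf i).preconnected ⟨v, hv i⟩ ⟨u, hi⟩).map (Subgraph.inclusion (le_iSup f i))

lemma Subgraph.IsNontrivialPath.connected {H : T.Subgraph} (hH : H.IsNontrivialPath) :
    H.Connected := by
  obtain ⟨_, _, p, -, -, rfl⟩ := hH
  exact p.toSubgraph_connected

lemma Subgraph.ncard_pow_le_ncard_connected_iSup [Finite V] {ι : Type*} [Fintype ι] [Nonempty ι]
    (P : T.Subgraph → Prop) (hP : ∀ H, P H → H.Connected) (v : V) :
    {H : T.Subgraph | P H ∧ v ∈ H.verts}.ncard ^ Fintype.card ι ≤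
      {f : ι → T.Subgraph | (∀ i, P (f i)) ∧ (⨆ i, f i).Connected}.ncard := by
  classical
  set S := {H : T.Subgraph | P H ∧ v ∈ H.verts}
  have hS := Set.toFinite S
  have hsub : (Fintype.piFinset fun _ : ι => hS.toFinset : Set (ι → T.Subgraph)) ⊆
      {f : ι → T.Subgraph | (∀ i, P (f i)) ∧ (⨆ i, f i).Connected} := by
    intro f hf
    have hf (i : ι) : f i ∈ S := hS.mem_toFinset.mp (Fintype.mem_piFinset.mp hf i)
    exact ⟨fun i => (hf i).1,
      connected_iSup_of_forall_mem_verts (fun i => hP _ (hf i).1) (fun i => (hf i).2)⟩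
  calc S.ncard ^ Fintype.card ι = #(Fintype.piFinset fun _ : ι => hS.toFinset) := by
        rw [Fintype.card_piFinset, prod_const, card_univ, Set.ncard_eq_toFinset_card S hS]
    _ ≤ _ := by
        rw [← Set.ncard_coe_finset]
        exact Set.ncard_le_ncard hsub (Set.toFinite _)

lemma Connected.exists_adj_dist_lt (hT : T.Connected) {v x : V} (hx : x ≠ v) :
    ∃ w, T.Adj v w ∧ T.dist w x < T.dist v x := by
  obtain ⟨p, -, hpl⟩ := hT.exists_path_of_dist v x
  cases p with
  | nil => exact absurd rfl hx
  | cons hvw q =>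
    rw [Walk.length_cons] at hpl
    exact ⟨_, hvw, (dist_le q).trans_lt (by omega)⟩

/- Stepping from `v` to `w` decreases the distance to each `y` in the filter and increases every
other distance by at most one. -/
lemma Connected.two_mul_card_filter_dist_lt_le [Fintype V] (hT : T.Connected) {v w : V}
    (hvw : T.Adj v w) (hv : ∑ y, T.dist v y ≤ ∑ y, T.dist w y) :
    2 * #{y | T.dist w y < T.dist v y} ≤ Fintype.card V := by
  have hstep : ∀ y, T.dist w y + (if T.dist w y < T.dist v y then 1 else 0) ≤
      T.dist v y + (if ¬ T.dist w y < T.dist v y then 1 else 0) := by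
    intro y
    have := hT.dist_triangle (u := w) (v := v) (w := y)
    rw [dist_eq_one_iff_adj.mpr hvw.symm] at this
    split_ifs <;> omega
  have hsum := sum_le_sum fun y (_ : y ∈ univ) => hstep y
  simp only [sum_add_distrib, sum_boole, Nat.cast_id] at hsum
  have := card_filter_add_card_filter_not (s := univ) (fun y => T.dist w y < T.dist v y)
  rw [card_univ] at this
  omega

namespace IsTree

lemma length_eq_dist (hT : T.IsTree) {x y : V} {p : T.Walk x y} (hp : p.IsPath) :
    p.length = T.dist x y := by
  obtain ⟨q, hq, hql⟩ := hT.connected.exists_path_of_dist x y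
  obtain rfl : p = q :=
    congrArg Subtype.val ((hT.isAcyclic.subsingleton_path x y).elim ⟨p, hp⟩ ⟨q, hq⟩)
  exact hql

lemma dist_add_dist_of_mem_support (hT : T.IsTree) {x y a : V} {p : T.Walk x y}
    (hp : p.IsPath) (ha : a ∈ p.support) : T.dist x a + T.dist a y = T.dist x y := by
  classical
  rw [← hT.length_eq_dist (hp.takeUntil ha), ← hT.length_eq_dist (hp.dropUntil ha),
    ← Walk.length_append, p.take_spec ha, hT.length_eq_dist hp]

lemma dist_le_of_mem_support (hT : T.IsTree) {x y a b : V} {p : T.Walk x y}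
    (hp : p.IsPath) (ha : a ∈ p.support) (hb : b ∈ p.support) : T.dist a b ≤ T.dist x y := by
  have hxa := hT.dist_add_dist_of_mem_support hp ha
  have hxb := hT.dist_add_dist_of_mem_support hp hb
  have hx := hT.connected.dist_triangle (u := a) (v := x) (w := b)
  have hy := hT.connected.dist_triangle (u := a) (v := y) (w := b)
  have hax : T.dist a x = T.dist x a := dist_comm
  have hby : T.dist y b = T.dist b y := dist_comm
  omega

lemma sym2_eq_of_mem_support_of_dist_eq (hT : T.IsTree) {x y a b : V} {p : T.Walk x y}
    (hp : p.IsPath) (ha : a ∈ p.support) (hb : b ∈ p.support)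
    (hab : T.dist a b = T.dist x y) : s(a, b) = s(x, y) := by
  classical
  rw [Sym2.eq_iff]
  have heq {u w : V} (h : T.dist u w = 0) : u = w := hT.connected.dist_eq_zero_iff.mp h
  have hxa := hT.dist_add_dist_of_mem_support hp ha
  rw [← p.take_spec ha, Walk.mem_support_append_iff] at hb
  rcases hb with hb | hb
  · have hxb := hT.dist_add_dist_of_mem_support (hp.takeUntil ha) hb
    rw [dist_comm (u := b)] at hxb
    exact Or.inr ⟨heq (by omega), (heq (by omega)).symm⟩
  · have hby := hT.dist_add_dist_of_mem_support (hp.dropUntil ha) hb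
    exact Or.inl ⟨(heq (by omega)).symm, heq (by omega)⟩

lemma sym2_eq_of_toSubgraph_eq (hT : T.IsTree) {x y x' y' : V}
    {p : T.Walk x y} {q : T.Walk x' y'} (hp : p.IsPath) (hq : q.IsPath)
    (h : p.toSubgraph = q.toSubgraph) : s(x', y') = s(x, y) := by
  have hsupp (z : V) : z ∈ p.support ↔ z ∈ q.support := by
    rw [← Walk.mem_verts_toSubgraph, h, Walk.mem_verts_toSubgraph]
  refine hT.sym2_eq_of_mem_support_of_dist_eq hp ((hsupp _).2 q.start_mem_support)
    ((hsupp _).2 q.end_mem_support) (le_antisymm ?_ ?_)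
  · exact hT.dist_le_of_mem_support hp ((hsupp _).2 q.start_mem_support)
      ((hsupp _).2 q.end_mem_support)
  · exact hT.dist_le_of_mem_support hq ((hsupp _).1 p.start_mem_support)
      ((hsupp _).1 p.end_mem_support)

/- For a neighbour `w` of `v`, `{y | T.dist w y < T.dist v y}` is the component of `T - v`
containing `w`. -/
lemma dist_lt_dist_of_adj_of_ne (hT : T.IsTree) {v w z z' : V} (hvw : T.Adj v w)
    (hz : T.dist w z < T.dist v z) (hzz' : T.Adj z z') (hz' : z' ≠ v) :
    T.dist w z' < T.dist v z' := by
  by_contra! hle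
  have hw := hT.dist_eq_dist_add_one_of_adj w hzz'
  have hv := hT.dist_eq_dist_add_one_of_adj v hzz'
  have htri := hT.connected.dist_triangle (u := v) (v := w) (w := z)
  rw [dist_eq_one_iff_adj.mpr hvw] at htri
  obtain ⟨p, -, hpl⟩ := hT.connected.exists_path_of_dist v z'
  obtain ⟨q, hq, hql⟩ := hT.connected.exists_path_of_dist w z
  -- the `v`–`z` path would run both through `z'` and through `w`, so `z'` lies between `w` and `z`
  have hpath : p.concat hzz'.symm = Walk.cons hvw q := by
    have h₁ : (p.concat hzz'.symm).IsPath :=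
      Walk.isPath_of_length_eq_dist _ (by rw [Walk.length_concat]; omega)
    have h₂ : (Walk.cons hvw q).IsPath :=
      Walk.isPath_of_length_eq_dist _ (by rw [Walk.length_cons]; omega)
    exact congrArg Subtype.val ((hT.isAcyclic.subsingleton_path v z).elim ⟨_, h₁⟩ ⟨_, h₂⟩)
  have hz'q : z' ∈ q.support := by
    have : z' ∈ (Walk.cons hvw q).support := by
      rw [← hpath, Walk.support_concat]
      exact List.mem_append_left _ p.end_mem_support
    simpa [hz'] using this
  have := hT.dist_add_dist_of_mem_support hq hz'q
  omega

lemma dist_lt_dist_of_walk (hT : T.IsTree) {v w x y : V} (hvw : T.Adj v w)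
    (hx : T.dist w x < T.dist v x) (p : T.Walk x y) (hv : v ∉ p.support) :
    T.dist w y < T.dist v y := by
  induction p with
  | nil => exact hx
  | cons hxz p ih =>
    rw [Walk.support_cons, List.mem_cons, not_or] at hv
    have hz : _ ≠ v := fun h => hv.2 (h ▸ p.start_mem_support)
    exact ih (hT.dist_lt_dist_of_adj_of_ne hvw hx hxz hz) hv.2

lemma exists_adj_forall_dist_lt (hT : T.IsTree) {v x : V} (hx : x ≠ v) :
    ∃ w, T.Adj v w ∧ ∀ y, T.dist x v + T.dist v y ≠ T.dist x y → T.dist w y < T.dist v y := by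
  obtain ⟨w, hvw, hwx⟩ := hT.connected.exists_adj_dist_lt hx
  refine ⟨w, hvw, fun y hy => ?_⟩
  obtain ⟨p, hp, -⟩ := hT.connected.exists_path_of_dist x y
  exact hT.dist_lt_dist_of_walk hvw hwx p fun hvp => hy (hT.dist_add_dist_of_mem_support hp hvp)

variable [Fintype V]

lemma two_mul_card_not_dist_add_le (hT : T.IsTree) {v : V}
    (hv : ∀ x, ∑ y, T.dist v y ≤ ∑ y, T.dist x y) :
    2 * #{z : V × V | T.dist z.1 v + T.dist v z.2 ≠ T.dist z.1 z.2} ≤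
      (Fintype.card V - 1) * Fintype.card V := by
  classical
  have : Nonempty V := ⟨v⟩
  choose! w hw using fun x (hx : x ≠ v) => hT.exists_adj_forall_dist_lt hx
  have hsub : ({z : V × V | T.dist z.1 v + T.dist v z.2 ≠ T.dist z.1 z.2} : Finset _) ⊆
      (univ.erase v).biUnion fun x => {x} ×ˢ ({y | T.dist (w x) y < T.dist v y} : Finset V) := by
    rintro ⟨x, y⟩ hxy
    simp only [mem_filter, mem_univ, true_and] at hxy
    have hx : x ≠ v := by rintro rfl; simp [dist_self] at hxy
    simp only [mem_biUnion, mem_erase, mem_univ, and_true, mem_product, mem_singleton,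
      mem_filter, true_and]
    exact ⟨x, hx, rfl, (hw x hx).2 y hxy⟩
  calc 2 * #{z : V × V | T.dist z.1 v + T.dist v z.2 ≠ T.dist z.1 z.2}
      ≤ 2 * ∑ x ∈ univ.erase v, #({x} ×ˢ ({y | T.dist (w x) y < T.dist v y} : Finset V)) :=
        Nat.mul_le_mul_left 2 ((card_le_card hsub).trans card_biUnion_le)
    _ = ∑ x ∈ univ.erase v, 2 * #{y | T.dist (w x) y < T.dist v y} := by
        simp only [mul_sum, card_product, card_singleton, one_mul]
    _ ≤ ∑ _x ∈ univ.erase v, Fintype.card V :=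
        sum_le_sum fun x hx =>
          hT.connected.two_mul_card_filter_dist_lt_le (hw x (ne_of_mem_erase hx)).1 (hv _)
    _ = (Fintype.card V - 1) * Fintype.card V := by
        rw [sum_const, smul_eq_mul, card_erase_of_mem (mem_univ v), card_univ]

lemma card_mul_card_sub_one_le_two_mul_card_dist_add [DecidableEq V] (hT : T.IsTree) {v : V}
    (hv : ∀ x, ∑ y, T.dist v y ≤ ∑ y, T.dist x y) :
    Fintype.card V * (Fintype.card V - 1) ≤
      2 * #{z : V × V | z.1 ≠ z.2 ∧ T.dist z.1 v + T.dist v z.2 = T.dist z.1 z.2} := by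
  have hbad := hT.two_mul_card_not_dist_add_le hv
  have hsplit : (univ.offDiag : Finset (V × V)) ⊆
      ({z : V × V | z.1 ≠ z.2 ∧ T.dist z.1 v + T.dist v z.2 = T.dist z.1 z.2} : Finset _) ∪
        ({z : V × V | T.dist z.1 v + T.dist v z.2 ≠ T.dist z.1 z.2} : Finset _) := by
    intro z hz
    simp only [mem_offDiag, mem_univ, true_and] at hz
    simp only [mem_union, mem_filter, mem_univ, true_and]
    tauto
  have hcard := (card_le_card hsplit).trans (card_union_le _ _)
  rw [offDiag_card, card_univ, ← Nat.mul_sub_one] at hcard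
  rw [mul_comm (Fintype.card V - 1)] at hbad
  omega

lemma card_dist_add_le_two_mul_ncard [DecidableEq V] (hT : T.IsTree) (v : V) :
    #{z : V × V | z.1 ≠ z.2 ∧ T.dist z.1 v + T.dist v z.2 = T.dist z.1 z.2} ≤
      2 * {H : T.Subgraph | H.IsNontrivialPath ∧ v ∈ H.verts}.ncard := by
  classical
  set A : Finset (V × V) := {z : V × V | z.1 ≠ z.2 ∧ T.dist z.1 v + T.dist v z.2 = T.dist z.1 z.2}
  choose P hP using fun a b => hT.connected.exists_path_of_dist a b
  let F : V × V → T.Subgraph := fun z => ((P z.1 v).append (P v z.2)).toSubgraph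
  have hpath : ∀ z ∈ A, ((P z.1 v).append (P v z.2)).IsPath := by
    intro z hz
    simp only [A, mem_filter, mem_univ, true_and] at hz
    exact Walk.isPath_of_length_eq_dist _
      (by rw [Walk.length_append, (hP _ _).2, (hP _ _).2, hz.2])
  have hmaps : ∀ z ∈ A, F z ∈ {H : T.Subgraph | H.IsNontrivialPath ∧ v ∈ H.verts} := by
    intro z hz
    refine ⟨⟨z.1, z.2, _, hpath z hz, ?_, rfl⟩, ?_⟩
    · rw [hT.length_eq_dist (hpath z hz)]
      exact hT.connected.pos_dist_of_ne (mem_filter.mp hz).2.1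
    · simp [F]
  have hfiber : ∀ s ∈ A.image F, #{z ∈ A | F z = s} ≤ 2 := by
    intro s hs
    obtain ⟨z₀, hz₀, rfl⟩ := mem_image.mp hs
    calc #{z ∈ A | F z = F z₀} ≤ #({z₀, z₀.swap} : Finset _) := card_le_card fun z hz => by
          obtain ⟨hz, hF⟩ := mem_filter.mp hz
          rcases Sym2.eq_iff.mp (hT.sym2_eq_of_toSubgraph_eq (hpath z₀ hz₀) (hpath z hz) hF.symm)
            with ⟨h₁, h₂⟩ | ⟨h₁, h₂⟩ <;> simp [Prod.ext_iff, h₁, h₂]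
      _ ≤ 2 := card_le_two
  calc #A ≤ 2 * #(A.image F) := card_le_mul_card_image A 2 hfiber
    _ ≤ _ := by
      gcongr
      rw [← Set.ncard_coe_finset]
      refine Set.ncard_le_ncard (fun H hH => ?_) (Set.toFinite _)
      obtain ⟨z, hz, rfl⟩ := mem_image.mp (mem_coe.mp hH)
      exact hmaps z hz

end IsTree

end SimpleGraph

/-- If `T` is a tree on `m ≥ 3` vertices and `r` is a positive integer, then
the number of ordered `r`-tuples `(P₁, …, P_r)` of (not necessarily distinct) non-trivial
paths of `T` whose union (as a subgraph of `T`) is connected, and hence a subtree of `T`,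
is at least `(m/4)^{2r}`. -/
theorem statement8 {V : Type*} [Fintype V] (T : SimpleGraph V)
    (hconn : T.Connected) (hacyc : T.IsAcyclic)
    (m : ℕ) (hm : Fintype.card V = m) (hm3 : 3 ≤ m) (r : ℕ) (hr : 0 < r) :
    ((m : ℝ) / 4) ^ (2 * r) ≤
      (({f : Fin r → T.Subgraph |
          (∀ i, ∃ (u v : V) (p : T.Walk u v), p.IsPath ∧ 0 < p.length ∧
            f i = p.toSubgraph) ∧
          (⨆ i, f i).Connected}.ncard : ℝ)) := by
  classical
  have hT : T.IsTree := ⟨hconn, hacyc⟩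
  have : Nonempty V := hconn.nonempty
  have : Nonempty (Fin r) := ⟨⟨0, hr⟩⟩
  obtain ⟨v, -, hv⟩ := exists_min_image univ (fun x => ∑ y, T.dist x y) univ_nonempty
  have hpairs := hT.card_mul_card_sub_one_le_two_mul_card_dist_add fun x => hv x (mem_univ x)
  have hpaths := hT.card_dist_add_le_two_mul_ncard v
  have htuples := SimpleGraph.Subgraph.ncard_pow_le_ncard_connected_iSup (ι := Fin r)
    (SimpleGraph.Subgraph.IsNontrivialPath (T := T)) (fun _ hH => hH.connected) v
  rw [Fintype.card_fin] at htuples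
  set N := {H : T.Subgraph | H.IsNontrivialPath ∧ v ∈ H.verts}.ncard
  have hN : m * m ≤ 16 * N := by
    rw [hm] at hpairs
    have : m * m ≤ 4 * (m * (m - 1)) := by
      obtain ⟨k, rfl⟩ : ∃ k, m = k + 1 := ⟨m - 1, by omega⟩
      rw [Nat.add_sub_cancel]
      nlinarith
    omega
  calc ((m : ℝ) / 4) ^ (2 * r) = ((m * m : ℕ) / 16 : ℝ) ^ r := by
        rw [pow_mul]; push_cast; ring
    _ ≤ (N : ℝ) ^ r := by
        gcongr
        rw [div_le_iff₀ (by norm_num)]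
        exact_mod_cast hN.trans_eq (mul_comm _ _)
    _ ≤ _ := by exact_mod_cast htuples
end

section
/- For all positive integers n and q with q ≥ 1.1·n, in the (q:1) Waiter-Client game on E(K_n) Client has a strategy to ensure that his graph contains no cycle at any point during the game (in particular, Client's final graph is a forest). -/
open SimpleGraph

/-- In the Waiter-Client game with bias `q`, set of free elements `F` and set `C` of elements
claimed so far by Client, Client has a strategy guaranteeing that the set of his claimed
elements satisfies `P` at every point for the rest of the game (in particular at the end). -/
def ClientCanKeep {α : Type*} [DecidableEq α] (q : ℕ) (P : Finset α → Prop)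
    (F C : Finset α) : Prop :=
  if F.card < q + 1 then P C
  else P C ∧ ∀ O ⊆ F, O.card = q + 1 → ∃ x ∈ O, ClientCanKeep q P (F \ O) (insert x C)
  termination_by F.card
  decreasing_by
    have h1 : O.Nonempty := by rw [← Finset.card_pos]; omega
    have h2 := Finset.card_sdiff_add_card_eq_card ‹O ⊆ F›
    have h4 := Finset.card_pos.mpr h1
    omega

/-!
Client follows a potential strategy in the spirit of Erdős–Selfridge. Every cycle `Z` of `K_n`
that Client can still complete gets weight `(q + 1)⁻¹ ^ #(Z \ C)`, where `C` is Client's edge set,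
and the potential is the total weight. Whatever `q + 1` edges Waiter offers, the new potentials
summed over Client's `q + 1` choices are at most `q + 1` times the old one: a cycle meeting the
offer twice dies, a cycle meeting it once survives for one choice only, with its weight multiplied
by `q + 1`, and the other cycles keep their weight. So Client can keep the potential below `1`,
and then he never completes a cycle, which would weigh `1` on its own. Initially, as `K_n` has at
most `n ^ k / (2k)` cycles of length `k`, the potential is at most
`∑ k ≥ 3, r ^ k / (2k) ≤ (-log (1 - r) - r - r ^ 2 / 2) / 2 < 1` for `r = n / (q + 1) ≤ 10 / 11`.
-/

open Finset

section Potential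

variable {α : Type*} [DecidableEq α]

theorem ClientCanKeep.of_invariant {q : ℕ} {P : Finset α → Prop}
    (I : Finset α → Finset α → Prop) (hP : ∀ F C, I F C → P C)
    (hI : ∀ F C O, I F C → O ⊆ F → #O = q + 1 → ∃ x ∈ O, I (F \ O) (insert x C))
    (F C : Finset α) (h : I F C) : ClientCanKeep q P F C := by
  induction F using Finset.strongInduction generalizing C with
  | H F ih =>
    rw [ClientCanKeep]
    split_ifs
    · exact hP F C h
    refine ⟨hP F C h, fun O hOF hO => ?_⟩
    obtain ⟨x, hx, hxI⟩ := hI F C O h hOF hO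
    have hOnonempty : O.Nonempty := card_pos.mp (by omega)
    exact ⟨x, hx, ih _ (sdiff_ssubset hOF hOnonempty) _ hxI⟩

noncomputable def potential (q : ℕ) (𝓕 : Finset (Finset α)) (F C : Finset α) : ℝ :=
  ∑ Z ∈ 𝓕 with Z ⊆ F ∪ C, ((q : ℝ) + 1)⁻¹ ^ #(Z \ C)

variable {q : ℕ} {𝓕 : Finset (Finset α)} {F C O : Finset α}

theorem potential_empty_le : potential q 𝓕 F ∅ ≤ ∑ Z ∈ 𝓕, ((q : ℝ) + 1)⁻¹ ^ #Z := by
  simp only [potential, sdiff_empty]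
  exact sum_le_sum_of_subset_of_nonneg (filter_subset _ _) fun _ _ _ => by positivity

theorem not_subset_of_potential_lt_one (h : potential q 𝓕 F C < 1) : ∀ Z ∈ 𝓕, ¬ Z ⊆ C := by
  intro Z hZ hZC
  have hterm : ((q : ℝ) + 1)⁻¹ ^ #(Z \ C) = 1 := by
    rw [sdiff_eq_empty_iff_subset.mpr hZC, card_empty, pow_zero]
  have hmem : Z ∈ {Z ∈ 𝓕 | Z ⊆ F ∪ C} := mem_filter.mpr ⟨hZ, hZC.trans subset_union_right⟩
  have := single_le_sum (f := fun Z => ((q : ℝ) + 1)⁻¹ ^ #(Z \ C)) (fun _ _ => by positivity) hmem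
  rw [potential] at h
  linarith

theorem sum_filter_pow_card_sdiff_insert_le {Z : Finset α} (hFC : Disjoint F C) (hOF : O ⊆ F)
    (hO : #O = q + 1) (hZ : Z ⊆ F ∪ C) :
    ∑ x ∈ O with Z ⊆ F \ O ∪ insert x C, ((q : ℝ) + 1)⁻¹ ^ #(Z \ insert x C)
      ≤ (q + 1) * ((q : ℝ) + 1)⁻¹ ^ #(Z \ C) := by
  by_cases hZO : Disjoint Z O
  · -- Client's choice does not touch `Z`, whichever `x` he takes.
    have hsub : ∀ x ∈ O, Z ⊆ F \ O ∪ insert x C := by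
      intro x _ z hz
      have := disjoint_left.mp hZO hz
      grind
    have hterm : ∀ x ∈ O, #(Z \ insert x C) = #(Z \ C) := by
      intro x hx
      rw [sdiff_insert, erase_eq_of_notMem fun h => disjoint_right.mp hZO hx (mem_sdiff.mp h).1]
    rw [filter_true_of_mem hsub, sum_congr rfl fun x hx => by rw [hterm x hx], sum_const, hO]
    simp
  · -- Only `x = e` keeps `Z` alive, and then `Z` misses one element fewer.
    obtain ⟨e, heZ, heO⟩ := not_disjoint_iff.mp hZO
    have heC : e ∉ C := disjoint_left.mp hFC (hOF heO)
    have hsub : {x ∈ O | Z ⊆ F \ O ∪ insert x C} ⊆ {e} := by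
      intro x hx
      have := (mem_filter.mp hx).2 heZ
      grind
    have hcard : #(Z \ insert e C) + 1 = #(Z \ C) := by
      rw [sdiff_insert, card_erase_add_one (mem_sdiff.mpr ⟨heZ, heC⟩)]
    calc ∑ x ∈ O with Z ⊆ F \ O ∪ insert x C, ((q : ℝ) + 1)⁻¹ ^ #(Z \ insert x C)
        ≤ ∑ x ∈ {e}, ((q : ℝ) + 1)⁻¹ ^ #(Z \ insert x C) :=
          sum_le_sum_of_subset_of_nonneg hsub fun _ _ _ => by positivity
      _ = (q + 1) * ((q : ℝ) + 1)⁻¹ ^ #(Z \ C) := by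
          rw [sum_singleton, ← hcard, pow_succ, mul_left_comm, mul_inv_cancel₀ (by positivity),
            mul_one]

theorem sum_potential_sdiff_insert_le (hFC : Disjoint F C) (hOF : O ⊆ F) (hO : #O = q + 1) :
    ∑ x ∈ O, potential q 𝓕 (F \ O) (insert x C) ≤ (q + 1) * potential q 𝓕 F C := by
  have hmono : ∀ x ∈ O, F \ O ∪ insert x C ⊆ F ∪ C := by
    intro x hx
    grind
  unfold potential
  rw [sum_comm' (t' := {Z ∈ 𝓕 | Z ⊆ F ∪ C}) (s' := fun Z => {x ∈ O | Z ⊆ F \ O ∪ insert x C})]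
  · rw [mul_sum]
    exact sum_le_sum fun Z hZ => sum_filter_pow_card_sdiff_insert_le hFC hOF hO (mem_filter.mp hZ).2
  · intro x Z
    simp only [mem_filter]
    constructor
    · rintro ⟨hx, hZ, hZx⟩
      exact ⟨⟨hx, hZx⟩, hZ, hZx.trans (hmono x hx)⟩
    · rintro ⟨⟨hx, hZx⟩, hZ, -⟩
      exact ⟨hx, hZ, hZx⟩

theorem exists_potential_sdiff_insert_lt_one (hFC : Disjoint F C) (hOF : O ⊆ F)
    (hO : #O = q + 1) (h : potential q 𝓕 F C < 1) :
    ∃ x ∈ O, potential q 𝓕 (F \ O) (insert x C) < 1 := by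
  apply exists_lt_of_sum_lt
  calc ∑ x ∈ O, potential q 𝓕 (F \ O) (insert x C) ≤ (q + 1) * potential q 𝓕 F C :=
        sum_potential_sdiff_insert_le hFC hOF hO
    _ < ∑ _x ∈ O, 1 := by
        rw [sum_const, hO, nsmul_one]
        push_cast
        nlinarith

theorem ClientCanKeep.of_potential_lt_one {P : Finset α → Prop}
    (hP : ∀ C, (∀ Z ∈ 𝓕, ¬ Z ⊆ C) → P C) (hFC : Disjoint F C) (h : potential q 𝓕 F C < 1) :
    ClientCanKeep q P F C := by
  refine ClientCanKeep.of_invariant (fun F C => Disjoint F C ∧ potential q 𝓕 F C < 1)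
    (fun F C hI => hP C (not_subset_of_potential_lt_one hI.2)) ?_ F C ⟨hFC, h⟩
  rintro F C O ⟨hFC, h⟩ hOF hO
  obtain ⟨x, hx, hlt⟩ := exists_potential_sdiff_insert_lt_one hFC hOF hO h
  refine ⟨x, hx, ?_, hlt⟩
  rw [disjoint_insert_right]
  exact ⟨fun h => (mem_sdiff.mp h).2 hx, disjoint_of_subset_left sdiff_subset hFC⟩

end Potential

theorem ZMod.two_ne_zero_of_three_le {k : ℕ} (hk : 3 ≤ k) : (2 : ZMod k) ≠ 0 := by
  rw [show (2 : ZMod k) = ((2 : ℕ) : ZMod k) by norm_cast, Ne, ZMod.natCast_eq_zero_iff]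
  intro h
  have := Nat.le_of_dvd two_pos h
  omega

section Cycles

variable {V : Type*} [DecidableEq V] {k : ℕ}

def cycleEdges [NeZero k] (f : ZMod k → V) : Finset (Sym2 V) :=
  univ.image fun i => s(f i, f (i + 1))

theorem card_cycleEdges [NeZero k] (hk : 3 ≤ k) {f : ZMod k → V} (hf : f.Injective) :
    #(cycleEdges f) = k := by
  rw [cycleEdges, card_image_of_injective, card_univ, ZMod.card]
  intro i j hij
  rcases Sym2.eq_iff.mp hij with ⟨hij, -⟩ | ⟨hij, hji⟩
  · exact hf hij
  · have hi : i = j + 1 := hf hij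
    have hj : i + 1 = j := hf hji
    exact absurd (by linear_combination hj - hi) (ZMod.two_ne_zero_of_three_le hk)

def dihedralPerm : DihedralGroup k → Equiv.Perm (ZMod k)
  | .r i => Equiv.addRight i
  | .sr i => Equiv.subLeft i

theorem dihedralPerm_injective (hk : 3 ≤ k) : (dihedralPerm (k := k)).Injective := by
  rintro (i | i) (j | j) h <;>
    have h0 := DFunLike.congr_fun h 0 <;> have h1 := DFunLike.congr_fun h 1 <;>
    simp only [dihedralPerm, Equiv.coe_addRight, Equiv.subLeft_apply] at h0 h1
  · simpa using h0
  · exact absurd (by linear_combination h1 - h0) (ZMod.two_ne_zero_of_three_le hk)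
  · exact absurd (by linear_combination h0 - h1) (ZMod.two_ne_zero_of_three_le hk)
  · simpa using h0

theorem cycleEdges_comp_dihedralPerm [NeZero k] (f : ZMod k → V) (g : DihedralGroup k) :
    cycleEdges (f ∘ dihedralPerm g) = cycleEdges f := by
  obtain ⟨e, he⟩ : ∃ e : Equiv.Perm (ZMod k), (fun x => s((f ∘ dihedralPerm g) x,
      (f ∘ dihedralPerm g) (x + 1))) = (fun y => s(f y, f (y + 1))) ∘ e := by
    cases g with
    | r i => exact ⟨Equiv.addRight i, funext fun x => by simp [dihedralPerm, add_right_comm]⟩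
    | sr i =>
      refine ⟨Equiv.subLeft (i - 1), funext fun x => ?_⟩
      simp only [dihedralPerm, Function.comp_apply, Equiv.subLeft_apply]
      rw [Sym2.eq_swap, show i - 1 - x + 1 = i - x by ring, show i - 1 - x = i - (x + 1) by ring]
  rw [cycleEdges, he, image_comp, image_univ_of_surjective e.surjective, cycleEdges]

variable [Fintype V]

theorem two_mul_le_card_filter_cycleEdges_eq [NeZero k] (hk : 3 ≤ k)
    {f : ZMod k → V} (hf : f.Injective) :
    2 * k ≤ #{g ∈ {g : ZMod k → V | g.Injective} | cycleEdges g = cycleEdges f} := by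
  have hinj : (fun g => f ∘ dihedralPerm g).Injective := fun g h hgh =>
    dihedralPerm_injective hk (Equiv.ext fun x => hf (congrFun hgh x))
  calc 2 * k = #(univ.image fun g => f ∘ dihedralPerm g) := by
        rw [card_image_of_injective _ hinj, card_univ, DihedralGroup.card]
    _ ≤ _ := by
        refine card_le_card fun g hg => ?_
        obtain ⟨g, -, rfl⟩ := mem_image.mp hg
        simp only [mem_filter, mem_univ, true_and]
        exact ⟨hf.comp (dihedralPerm g).injective, cycleEdges_comp_dihedralPerm f g⟩

variable (V) in
def cycleSetsOfLength (k : ℕ) [NeZero k] : Finset (Finset (Sym2 V)) :=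
  ({f | f.Injective} : Finset (ZMod k → V)).image cycleEdges

theorem card_of_mem_cycleSetsOfLength [NeZero k] (hk : 3 ≤ k)
    {Z : Finset (Sym2 V)} (hZ : Z ∈ cycleSetsOfLength V k) : #Z = k := by
  obtain ⟨f, hf, rfl⟩ := mem_image.mp hZ
  exact card_cycleEdges hk (mem_filter.mp hf).2

theorem two_mul_mul_card_cycleSetsOfLength_le [NeZero k] (hk : 3 ≤ k) :
    2 * k * #(cycleSetsOfLength V k) ≤ Fintype.card V ^ k := by
  calc 2 * k * #(cycleSetsOfLength V k) ≤ #{f : ZMod k → V | f.Injective} := by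
        refine mul_card_image_le_card_of_maps_to (fun _ hf => mem_image_of_mem _ hf) _ ?_
        intro Z hZ
        obtain ⟨f, hf, rfl⟩ := mem_image.mp hZ
        exact two_mul_le_card_filter_cycleEdges_eq hk (mem_filter.mp hf).2
    _ ≤ Fintype.card V ^ k := by
        refine (card_filter_le _ _).trans ?_
        rw [card_univ, Fintype.card_fun, ZMod.card]

variable (V) in
/-- The edge sets of the cycles of the complete graph on `V`. -/
def cycleSets : Finset (Finset (Sym2 V)) :=
  (range (Fintype.card V)).biUnion fun m => cycleSetsOfLength V (m + 3)

theorem isAcyclic_clientGraph_of_forall_not_subset {C : Finset (Sym2 V)}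
    (h : ∀ Z ∈ cycleSets V, ¬ Z ⊆ C) : (clientGraph C).IsAcyclic := by
  intro v c hc
  obtain ⟨m, hm⟩ : ∃ m, c.length = m + 3 := ⟨c.length - 3, by have := hc.three_le_length; omega⟩
  have : Fact (1 < m + 3) := ⟨by omega⟩
  let f : ZMod (m + 3) → V := fun i => c.getVert i.val
  have hf : f.Injective := fun i j hij => ZMod.val_injective _ <|
    hc.getVert_injOn' (by simp only [Set.mem_ofPred_eq]; have := i.val_lt; omega)
      (by simp only [Set.mem_ofPred_eq]; have := j.val_lt; omega) hij
  have hsucc : ∀ i : ZMod (m + 3), f (i + 1) = c.getVert (i.val + 1) := by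
    intro i
    simp only [f, ZMod.val_add, ZMod.val_one]
    rcases Nat.lt_or_ge (i.val + 1) (m + 3) with hi | hi
    · rw [Nat.mod_eq_of_lt hi]
    · have hi : i.val + 1 = c.length := by have := i.val_lt; omega
      rw [hi, ← hm, Nat.mod_self, c.getVert_zero, c.getVert_length]
  refine h (cycleEdges f) (mem_biUnion.mpr ⟨m, ?_, mem_image_of_mem _ ?_⟩) ?_
  · have := Fintype.card_le_of_injective f hf
    rw [ZMod.card] at this
    exact mem_range.mpr (by omega)
  · exact mem_filter.mpr ⟨mem_univ _, hf⟩
  · intro e he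
    obtain ⟨i, -, rfl⟩ := mem_image.mp he
    have hadj := c.adj_getVert_succ (i := i.val) (by have := i.val_lt; omega)
    rw [hsucc]
    exact ((fromEdgeSet_adj _).mp hadj).1

theorem sum_cycleSets_pow_card_le {x : ℝ} (hx : 0 ≤ x) :
    ∑ Z ∈ cycleSets V, x ^ #Z
      ≤ ∑ m ∈ range (Fintype.card V), (Fintype.card V * x) ^ (m + 3) / (2 * (m + 3)) := by
  rw [cycleSets, sum_biUnion]
  · refine sum_le_sum fun m _ => ?_
    rw [sum_congr rfl fun Z hZ => by rw [card_of_mem_cycleSetsOfLength (by omega) hZ],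
      sum_const, nsmul_eq_mul, mul_pow, le_div_iff₀ (by positivity)]
    have hcount : (2 * (m + 3) * #(cycleSetsOfLength V (m + 3)) : ℝ) ≤ Fintype.card V ^ (m + 3) :=
      mod_cast two_mul_mul_card_cycleSetsOfLength_le (by omega)
    nlinarith [pow_nonneg hx (m + 3)]
  · intro a _ b _ hab
    refine disjoint_left.mpr fun Z ha hb => hab ?_
    have := (card_of_mem_cycleSetsOfLength (by omega) ha).symm.trans
      (card_of_mem_cycleSetsOfLength (by omega) hb)
    omega

end Cycles

theorem sum_pow_add_three_div_lt_one {r : ℝ} (h0 : 0 ≤ r) (h1 : r ≤ 10 / 11) (s : Finset ℕ) :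
    ∑ m ∈ s, r ^ (m + 3) / (2 * (m + 3)) < 1 := by
  have hlog : HasSum (fun m : ℕ => (10 / 11 : ℝ) ^ (m + 2 + 1) / ((m + 2 : ℕ) + 1))
      (-Real.log (1 - 10 / 11) - ∑ i ∈ range 2, (10 / 11 : ℝ) ^ (i + 1) / (i + 1)) :=
    (hasSum_nat_add_iff' 2).mpr
      (Real.hasSum_pow_div_log_of_abs_lt_one (by rw [abs_of_pos (by norm_num)]; norm_num))
  have hlog11 : Real.log 11 < 3 := by
    rw [Real.log_lt_iff_lt_exp (by norm_num), show (3 : ℝ) = 1 + 1 + 1 by norm_num,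
      Real.exp_add, Real.exp_add]
    have := Real.exp_one_gt_d9
    nlinarith
  calc ∑ m ∈ s, r ^ (m + 3) / (2 * (m + 3))
      ≤ ∑ m ∈ s, (10 / 11 : ℝ) ^ (m + 3) / (2 * (m + 3)) := by gcongr
    _ = (∑ m ∈ s, (10 / 11 : ℝ) ^ (m + 2 + 1) / ((m + 2 : ℕ) + 1)) / 2 := by
        rw [sum_div]
        refine sum_congr rfl fun m _ => ?_
        rw [div_div]
        push_cast
        ring_nf
    _ ≤ (-Real.log (1 - 10 / 11) - ∑ i ∈ range 2, (10 / 11 : ℝ) ^ (i + 1) / (i + 1)) / 2 := by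
        gcongr
        exact sum_le_hasSum s (fun _ _ => by positivity) hlog
    _ < 1 := by
        rw [show (1 : ℝ) - 10 / 11 = 11⁻¹ by norm_num, Real.log_inv]
        norm_num [sum_range_succ]
        linarith

theorem statement10_general (n q : ℕ) (h : (1.1 : ℝ) * n ≤ (q : ℝ)) :
    ClientCanKeep q
      (fun C : Finset (Sym2 (Fin n)) => (clientGraph C).IsAcyclic)
      (knBoard n) ∅ := by
  have hr : (n : ℝ) * ((q : ℝ) + 1)⁻¹ ≤ 10 / 11 := by
    rw [mul_inv_le_iff₀ (by positivity)]
    linarith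
  refine ClientCanKeep.of_potential_lt_one (𝓕 := cycleSets (Fin n))
    (fun _ hC => isAcyclic_clientGraph_of_forall_not_subset hC) (disjoint_empty_right _) ?_
  calc potential q (cycleSets (Fin n)) (knBoard n) ∅
      ≤ ∑ Z ∈ cycleSets (Fin n), ((q : ℝ) + 1)⁻¹ ^ #Z := potential_empty_le
    _ ≤ ∑ m ∈ range n, (n * ((q : ℝ) + 1)⁻¹) ^ (m + 3) / (2 * (m + 3)) := by
        simpa using sum_cycleSets_pow_card_le (V := Fin n) (x := ((q : ℝ) + 1)⁻¹) (by positivity)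
    _ < 1 := sum_pow_add_three_div_lt_one (by positivity) hr (range n)

/-- For all positive integers `n` and `q` with `q ≥ 1.1 n`, in the
`(q : 1)` Waiter-Client game on `E(K_n)` Client has a strategy ensuring that his graph
contains no cycle at any point during the game. -/
theorem statement10 (n q : ℕ) (hn : 0 < n) (hq : 0 < q) (h : (1.1 : ℝ) * n ≤ (q : ℝ)) :
    ClientCanKeep q
      (fun C : Finset (Sym2 (Fin n)) => (clientGraph C).IsAcyclic)
      (knBoard n) ∅ :=
  statement10_general n q h
end

section
/- Let 0 < α < 1 be a real number and let G be a (2,α)-expander on n vertices that contains a Hamilton path u_1 u_2 … u_n. Let U = {z ∈ V(G) : there exists a Hamilton path in G between u_1 and z}. Then |U| ≥ α·n. -/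
/-!
Pósa's rotation argument. If the last vertex `z` of a Hamilton path `P` from `u` is adjacent to a
vertex `x` of `P`, reversing the segment of `P` after `x` yields a Hamilton path from `u` ending at
the successor of `x`. Let `U` be the set of endpoints of all paths obtained from the given Hamilton
path `P₀` by repeated rotations. A rotation only breaks the edge from `x` to the new endpoint, so an
edge of `P₀` with neither end in `U` survives in every rotated path. Now let `v ∉ U` be adjacent to
the endpoint of a rotated path `P`; rotating at `v` puts the `P`-successor of `v` into `U`. If both
`P₀`-neighbours of `v` were outside `U`, they would both remain `P`-neighbours of `v`, and then one
of them would be that successor. Hence every vertex of `N(U)` is a `P₀`-predecessor or a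
`P₀`-successor of a vertex of `U`, so `|N(U)| ≤ 2|U| - 1`, the last vertex of `P₀` having no
successor. The expansion property then forbids `|U| ≤ α n`.
-/

/-- The external neighbourhood `N_G(S)` of a set `S` of vertices. -/
def nbrSet {V : Type*} (G : SimpleGraph V) (S : Set V) : Set V :=
  {v | v ∉ S ∧ ∃ u ∈ S, G.Adj u v}

/-- A `(d, ε)`-expander: every set `S` of at most `ε * |V|` vertices satisfies
`|N_G(S)| ≥ d * |S|`. -/
def IsExpander {V : Type*} [Fintype V] (G : SimpleGraph V) (d ε : ℝ) : Prop :=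
  ∀ S : Set V, (S.ncard : ℝ) ≤ ε * Fintype.card V → d * S.ncard ≤ ((nbrSet G S).ncard : ℝ)

namespace List

variable {α : Type*} {l l₁ l₂ : List α} {a b c x : α}

theorem pair_infix_append (h : [a, b] <:+: l₁ ++ l₂) :
    [a, b] <:+: l₁ ∨ [a, b] <:+: l₂ ∨ (l₁.getLast? = some a ∧ l₂.head? = some b) := by
  rcases infix_append_iff_ne_nil.mp h with h | h | ⟨m₁, m₂, hm₁, hm₂, hab, hs, hp⟩
  · exact .inl h
  · exact .inr (.inl h)
  · obtain ⟨rfl, rfl⟩ : m₁ = [a] ∧ m₂ = [b] := by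
      rcases m₁ with _ | ⟨_, _ | _⟩ <;> rcases m₂ with _ | ⟨_, _ | _⟩ <;> simp_all
    exact .inr (.inr ⟨singleton_suffix_iff_getLast?_eq_some.mp hs,
      singleton_prefix_iff_head?_eq_some.mp hp⟩)

theorem pair_infix_append_reverse (h : [a, b] <:+: l₁ ++ l₂) (hb : l₂.head? ≠ some b) :
    [a, b] <:+: l₁ ++ l₂.reverse ∨ [b, a] <:+: l₁ ++ l₂.reverse := by
  rcases pair_infix_append h with h | h | ⟨-, h⟩
  · exact .inl (infix_append_of_infix_left h)
  · exact .inr (infix_append_of_infix_right (by simpa using reverse_infix.mpr h))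
  · exact absurd h hb

theorem Nodup.formPerm_apply_of_pair_infix [DecidableEq α] (hl : l.Nodup) (h : [a, b] <:+: l) :
    l.formPerm a = b := by
  obtain ⟨s, t, rfl⟩ := h
  simpa using formPerm_apply_lt_getElem _ hl s.length (by simp)

theorem Nodup.pair_infix_right_unique (hl : l.Nodup) (hb : [a, b] <:+: l) (hc : [a, c] <:+: l) :
    b = c := by
  classical
  exact (hl.formPerm_apply_of_pair_infix hb).symm.trans (hl.formPerm_apply_of_pair_infix hc)

theorem Nodup.pair_infix_left_unique (hl : l.Nodup) (ha : [a, c] <:+: l) (hb : [b, c] <:+: l) :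
    a = b :=
  (nodup_reverse.mpr hl).pair_infix_right_unique (a := c) (by simpa using reverse_infix.mpr ha)
    (by simpa using reverse_infix.mpr hb)

theorem Nodup.not_pair_infix_of_head? (hl : l.Nodup) (hb : l.head? = some b) :
    ¬[a, b] <:+: l := by
  obtain ⟨t, rfl⟩ : ∃ t, l = b :: t := by cases l <;> simp_all
  have hbt : b ∉ t := (nodup_cons.mp hl).1
  intro h
  rcases infix_cons_iff.mp h with h | h
  · obtain ⟨r, hr⟩ := h
    simp only [cons_append, nil_append, cons.injEq] at hr
    exact hbt (hr.2 ▸ mem_cons_self)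
  · exact hbt (h.subset (by simp))

theorem Nodup.not_pair_infix_of_getLast? (hl : l.Nodup) (ha : l.getLast? = some a) :
    ¬[a, b] <:+: l := fun h =>
  (nodup_reverse.mpr hl).not_pair_infix_of_head? (by simpa using ha)
    (by simpa using reverse_infix.mpr h)

theorem exists_pair_infix_of_getLast?_ne (hx : x ∈ l) (h : l.getLast? ≠ some x) :
    ∃ y, [x, y] <:+: l := by
  obtain ⟨s, t, rfl⟩ := append_of_mem hx
  cases t with
  | nil => simp at h
  | cons y t => exact ⟨y, s, t, by simp⟩

theorem exists_triple_infix (hx : x ∈ l) (h₁ : l.head? ≠ some x) (h₂ : l.getLast? ≠ some x) :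
    ∃ a b, [a, x, b] <:+: l := by
  obtain ⟨s, t, rfl⟩ := append_of_mem hx
  rcases eq_nil_or_concat s with rfl | ⟨s, a, rfl⟩
  · simp at h₁
  cases t with
  | nil => simp at h₂
  | cons b t => exact ⟨a, b, s, t, by simp⟩

end List

namespace SimpleGraph

variable {V : Type*} {G : SimpleGraph V} {l₀ l : List V} {a b s v z : V}

/-- The paths reachable from the path `l₀` by Pósa rotations: if the last vertex of the path
`p ++ q` is adjacent to the last vertex of `p`, then `p ++ q.reverse` is again a path. -/
inductive RotationReachable (G : SimpleGraph V) (l₀ : List V) : List V → Prop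
  | refl : G.RotationReachable l₀ l₀
  | rotate {p q : List V} {x z : V} : G.RotationReachable l₀ (p ++ q) →
      p.getLast? = some x → q.getLast? = some z → G.Adj z x →
      G.RotationReachable l₀ (p ++ q.reverse)

def rotationEnds (G : SimpleGraph V) (l₀ : List V) : Set V :=
  {z | ∃ l, G.RotationReachable l₀ l ∧ l.getLast? = some z}

namespace RotationReachable

theorem perm (h : G.RotationReachable l₀ l) : l.Perm l₀ := by
  induction h with
  | refl => rfl
  | rotate _ _ _ _ ih => exact (List.Perm.append_left _ (List.reverse_perm _)).trans ih

theorem head? (h : G.RotationReachable l₀ l) : l.head? = l₀.head? := by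
  induction h with
  | refl => rfl
  | @rotate p q x _ _ hx _ _ ih =>
    obtain ⟨p, rfl⟩ : ∃ p', p = p' ++ [x] :=
      ⟨p.dropLast, (List.dropLast_append_getLast? x hx).symm⟩
    simpa using ih

theorem isChain (h : G.RotationReachable l₀ l) (h₀ : l₀.IsChain G.Adj) : l.IsChain G.Adj := by
  induction h with
  | refl => exact h₀
  | @rotate p q x z _ hx hz hzx ih =>
    rw [List.isChain_append] at ih ⊢
    refine ⟨ih.1, List.isChain_reverse.mpr (ih.2.1.imp fun _ _ h => h.symm), ?_⟩
    rintro x' hx' z' hz'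
    rw [List.head?_reverse, hz] at hz'
    rw [hx] at hx'
    cases hx'; cases hz'
    exact hzx.symm

theorem mem_rotationEnds_of_pair_infix (h : G.RotationReachable l₀ l)
    (hz : l.getLast? = some z) (hzv : G.Adj z v) (hvs : [v, s] <:+: l) :
    s ∈ G.rotationEnds l₀ := by
  obtain ⟨p, q, rfl⟩ := hvs
  have h' : G.RotationReachable l₀ (p ++ [v] ++ s :: q) := by simpa using h
  have hrot := h'.rotate (by simp) (by simpa using hz) hzv
  exact ⟨_, hrot, by rw [List.getLast?_append, List.getLast?_reverse]; rfl⟩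

theorem pair_infix (h : G.RotationReachable l₀ l)
    (hab : [a, b] <:+: l₀ ∨ [b, a] <:+: l₀)
    (ha : a ∉ G.rotationEnds l₀) (hb : b ∉ G.rotationEnds l₀) :
    [a, b] <:+: l ∨ [b, a] <:+: l := by
  induction h with
  | refl => exact hab
  | @rotate p q x z hl hx hz hzx ih =>
    have hend : ∀ {y}, q.head? = some y → y ∈ G.rotationEnds l₀ :=
      fun hy => ⟨_, hl.rotate hx hz hzx, by simp [List.getLast?_append, hy]⟩
    rcases ih with h | h
    · exact List.pair_infix_append_reverse h fun hq => hb (hend hq)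
    · exact (List.pair_infix_append_reverse h fun hq => ha (hend hq)).symm

end RotationReachable

theorem exists_pair_infix_of_mem_nbrSet_rotationEnds (hnd : l₀.Nodup) (hall : ∀ x, x ∈ l₀)
    (hv : v ∈ nbrSet G (G.rotationEnds l₀)) :
    ∃ w ∈ G.rotationEnds l₀, [v, w] <:+: l₀ ∨ [w, v] <:+: l₀ := by
  obtain ⟨hvU, z, ⟨l, hl, hz⟩, hzv⟩ := hv
  by_contra! hno
  have hndl : l.Nodup := hl.perm.nodup_iff.mpr hnd
  obtain ⟨s, hvs⟩ := List.exists_pair_infix_of_getLast?_ne (hl.perm.mem_iff.mpr (hall v))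
    fun h => hvU ⟨l, hl, h⟩
  have hsU : s ∈ G.rotationEnds l₀ := hl.mem_rotationEnds_of_pair_infix hz hzv hvs
  -- `v` has only one successor on `l`, and it lies in `rotationEnds`
  have hpred : ∀ c, ([v, c] <:+: l₀ ∨ [c, v] <:+: l₀) → [c, v] <:+: l := by
    intro c hc
    have hcU : c ∉ G.rotationEnds l₀ := fun h => hc.elim (hno c h).1 (hno c h).2
    refine (hl.pair_infix hc hvU hcU).resolve_left fun h => hcU ?_
    rwa [← hndl.pair_infix_right_unique hvs h]
  have hlast : l₀.getLast? ≠ some v := fun h => hvU ⟨l₀, .refl, h⟩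
  by_cases hhead : l₀.head? = some v
  · obtain ⟨t, hvt⟩ := List.exists_pair_infix_of_getLast?_ne (hall v) hlast
    exact hndl.not_pair_infix_of_head? (hl.head?.trans hhead) (hpred t (.inl hvt))
  · obtain ⟨r, t, hrvt⟩ := List.exists_triple_infix (hall v) hhead hlast
    have hrt : r ≠ t := by
      rintro rfl
      simpa using hrvt.sublist.nodup hnd
    exact hrt <| hndl.pair_infix_left_unique
      (hpred r (.inr (List.IsInfix.trans ⟨[], [t], rfl⟩ hrvt)))
      (hpred t (.inl (List.IsInfix.trans ⟨[r], [], rfl⟩ hrvt)))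

theorem ncard_nbrSet_rotationEnds_lt [Finite V] {w₀ : V} (hnd : l₀.Nodup) (hall : ∀ x, x ∈ l₀)
    (hw₀ : l₀.getLast? = some w₀) :
    (nbrSet G (G.rotationEnds l₀)).ncard < 2 * (G.rotationEnds l₀).ncard := by
  classical
  set U := G.rotationEnds l₀
  set σ := l₀.formPerm
  have hw₀U : w₀ ∈ U := ⟨l₀, .refl, hw₀⟩
  have hsub : nbrSet G U ⊆ σ.symm '' U ∪ σ '' (U \ {w₀}) := by
    intro v hv
    obtain ⟨w, hwU, hvw | hwv⟩ := exists_pair_infix_of_mem_nbrSet_rotationEnds hnd hall hv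
    · exact .inl ⟨w, hwU, by rw [← hnd.formPerm_apply_of_pair_infix hvw, Equiv.symm_apply_apply]⟩
    · refine .inr ⟨w, ⟨hwU, ?_⟩, hnd.formPerm_apply_of_pair_infix hwv⟩
      rintro rfl
      exact hnd.not_pair_infix_of_getLast? hw₀ hwv
  have hpos : 0 < U.ncard := (Set.ncard_pos (Set.toFinite U)).mpr ⟨w₀, hw₀U⟩
  calc (nbrSet G U).ncard
      ≤ (σ.symm '' U ∪ σ '' (U \ {w₀})).ncard := Set.ncard_le_ncard hsub (Set.toFinite _)
    _ ≤ (σ.symm '' U).ncard + (σ '' (U \ {w₀})).ncard := Set.ncard_union_le _ _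
    _ = U.ncard + (U.ncard - 1) := by
      rw [Set.ncard_image_of_injective _ σ.symm.injective,
        Set.ncard_image_of_injective _ σ.injective, Set.ncard_sdiff_singleton_of_mem hw₀U]
    _ < 2 * U.ncard := by omega

theorem Walk.IsHamiltonian.exists_isHamiltonian_of_perm [DecidableEq V] {u v : V} {p : G.Walk u v}
    (hp : p.IsHamiltonian) (hl : l.Perm p.support) (hc : l.IsChain G.Adj)
    (hu : l.head? = some u) (hz : l.getLast? = some z) :
    ∃ w : G.Walk u z, w.IsHamiltonian := by
  have hne : l ≠ [] := by rintro rfl; simp at hu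
  refine ⟨(Walk.ofSupport l hne hc).copy (by simp_all [List.head?_eq_some_head hne])
    (by simp_all [List.getLast?_eq_some_getLast hne]), fun x => ?_⟩
  rw [Walk.support_copy, Walk.support_ofSupport]
  exact List.count_eq_one_of_mem (hl.nodup_iff.mpr hp.isPath.support_nodup)
    (hl.mem_iff.mpr (hp.mem_support x))

end SimpleGraph

theorem statement13_general {V : Type*} [Fintype V] [DecidableEq V] (G : SimpleGraph V)
    (n : ℕ) (hn : Fintype.card V = n) (α : ℝ)
    (hexp : IsExpander G 2 α)
    (u v : V) (p : G.Walk u v) (hp : p.IsHamiltonian) :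
    α * n ≤ (({z : V | ∃ w : G.Walk u z, w.IsHamiltonian}.ncard : ℝ)) := by
  set U := G.rotationEnds p.support
  have hUsub : U ⊆ {z : V | ∃ w : G.Walk u z, w.IsHamiltonian} := by
    rintro z ⟨l, hl, hz⟩
    exact hp.exists_isHamiltonian_of_perm hl.perm (hl.isChain p.isChain_adj_support)
      (by rw [hl.head?, ← p.cons_tail_support]; rfl) hz
  have hlt : (nbrSet G U).ncard < 2 * U.ncard :=
    SimpleGraph.ncard_nbrSet_rotationEnds_lt hp.isPath.support_nodup hp.mem_support
      (by rw [List.getLast?_eq_some_getLast p.support_ne_nil, p.getLast_support])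
  by_contra! hsmall
  have hUsmall : (U.ncard : ℝ) ≤ α * Fintype.card V := by
    rw [hn]
    exact le_trans (by exact_mod_cast Set.ncard_le_ncard hUsub) hsmall.le
  have hexpU := hexp U hUsmall
  have : ((nbrSet G U).ncard : ℝ) < 2 * U.ncard := by exact_mod_cast hlt
  linarith

/-- Pósa. Let `0 < α < 1` and let `G` be a `(2, α)`-expander on `n`
vertices containing a Hamilton path starting at `u`.  Then the set of vertices `z` such that
`G` has a Hamilton path between `u` and `z` has size at least `α n`. -/
theorem statement13 {V : Type*} [Fintype V] [DecidableEq V] (G : SimpleGraph V)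
    (n : ℕ) (hn : Fintype.card V = n) (α : ℝ) (hα0 : 0 < α) (hα1 : α < 1)
    (hexp : IsExpander G 2 α)
    (u v : V) (p : G.Walk u v) (hp : p.IsHamiltonian) :
    α * n ≤ (({z : V | ∃ w : G.Walk u z, w.IsHamiltonian}.ncard : ℝ)) :=
  statement13_general G n hn α hexp u v p hp
end

section
/- Let G be a complete bipartite graph with parts U and W, where |U| = n and |W| = ⌊5n/6⌋, and let d and q be positive integers with q ≤ n/(150·d). Then, for all sufficiently large n, in the (q:1) Waiter-Client game on E(G) Waiter has a strategy to ensure that at the end of the game, for every set A ⊆ U of size ⌈n/(7d)⌉ and every set B ⊆ W of size ⌈n/7⌉, Client has claimed at least one edge with one endpoint in A and the other endpoint in B. -/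
open SimpleGraph

/-- The board of the game played on the edge set of the complete bipartite graph with parts
`Fin n` and `Fin m`. -/
noncomputable def cbBoard (n m : ℕ) : Finset (Sym2 (Fin n ⊕ Fin m)) :=
  (Set.toFinite (completeBipartiteGraph (Fin n) (Fin m)).edgeSet).toFinset

/-!
Waiter plays a potential strategy. A winning set not yet hit by Client, with `f` of its elements
still free, has weight `exp (-f / (2 (q + 1)))`; the potential `Φ` is the total weight and `w v`
the weight of the sets through `v`. When Client takes `x` from an offer `O`, the sets through `x`
die while every other set gains a factor of at most `1 + 5 / (6 (q + 1))` per element of `O` it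
contains, so `Φ` changes by at most `-w x + 5 / (6 (q + 1)) * ∑ v ∈ O \ {x}, w v`.
Waiter sorts the free elements into the levels `(5/6)^(i+1) Φ < w v ≤ (5/6)^i Φ` for `i < J` and
a bottom level `w v ≤ (5/6)^J Φ`, and by pigeonhole offers `q + 1` elements of one level: on a
level `i < J` the weights are comparable and `Φ` does not increase, on the bottom level it grows
by a factor of at most `1 + (5/6)^J`. As `J` may drop by one per round, these factors multiply to
at most `e^6`, so an initial potential below `e^(-7)` stays below `e^(-1/2)` to the end, whereas a
single set missed by Client would contribute more than that. For the bipartite family the initial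
potential is at most `2^(n + 5n/6) exp (-(n / (7d)) (n / 7) / (2 (q + 1)))`, which is below
`e^(-7)` when `q ≤ n / (150 d)` and `n ≥ 1500 d`.
-/

open Finset Real

theorem WaiterCanForce.mono {α : Type*} [DecidableEq α] {q : ℕ} {P Q : Finset α → Prop}
    (hPQ : ∀ C, P C → Q C) {F C : Finset α} (h : WaiterCanForce q P F C) :
    WaiterCanForce q Q F C := by
  induction hN : #F using Nat.strong_induction_on generalizing F C with
  | _ N ih =>
    rw [WaiterCanForce] at h ⊢
    split_ifs at h ⊢ with hF
    · exact hPQ C h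
    · obtain ⟨O, hOF, hO, hnext⟩ := h
      refine ⟨O, hOF, hO, fun x hx hOF' => ih _ ?_ (hnext x hx hOF') rfl⟩
      rw [card_sdiff_of_subset hOF]
      omega

theorem Real.exp_le_one_add_five_thirds_mul {t : ℝ} (ht₀ : 0 ≤ t) (ht : t ≤ 1 / 2) :
    exp t ≤ 1 + 5 / 3 * t := by
  have h_tangent : (1 - t) * exp t ≤ 1 := by
    calc (1 - t) * exp t ≤ exp (-t) * exp t := by
          gcongr
          linarith [add_one_le_exp (-t)]
      _ = 1 := by rw [← exp_add, neg_add_cancel, exp_zero]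
  have h_half : exp (1 / 2) ≤ 5 / 3 := by
    have h_sq : exp (1 / 2) * exp (1 / 2) = exp 1 := by rw [← exp_add]; norm_num
    nlinarith [exp_one_lt_d9, exp_pos (1 / 2)]
  have h_mono : exp t ≤ exp (1 / 2) := exp_le_exp.2 ht
  nlinarith

theorem Finset.exists_subset_card_eq_low_or_same_level {α : Type*} {w : α → ℝ} {M r : ℝ}
    {F : Finset α} {J q : ℕ} (hJ : (J + 1) * q < #F) (hw : ∀ v ∈ F, w v ≤ M) :
    ∃ O ⊆ F, #O = q + 1 ∧ ((∀ v ∈ O, w v ≤ M * r ^ J) ∨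
      ∃ i, ∀ v ∈ O, M * r ^ (i + 1) < w v ∧ w v ≤ M * r ^ i) := by
  classical
  let level v := Nat.findGreatest (fun i => w v ≤ M * r ^ i) J
  have hlevel : ∀ v ∈ F, w v ≤ M * r ^ level v := fun v hv =>
    Nat.findGreatest_spec (P := fun i => w v ≤ M * r ^ i) (Nat.zero_le J) (by simpa using hw v hv)
  obtain ⟨i, hi, hfiber⟩ := exists_lt_card_fiber_of_mul_lt_card_of_maps_to
    (f := level) (t := range (J + 1)) (fun v _ => mem_range.2 (Nat.lt_succ_of_le
      (Nat.findGreatest_le J))) (by rwa [card_range])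
  obtain ⟨O, hOfiber, hO⟩ := exists_subset_card_eq hfiber
  have hmem : ∀ v ∈ O, v ∈ F ∧ level v = i := fun v hv => mem_filter.1 (hOfiber hv)
  refine ⟨O, fun v hv => (hmem v hv).1, hO, ?_⟩
  rcases (Nat.lt_succ_iff.1 (mem_range.1 hi)).eq_or_lt with rfl | hiJ
  · exact Or.inl fun v hv => (hmem v hv).2 ▸ hlevel v (hmem v hv).1
  · refine Or.inr ⟨i, fun v hv =>
      ⟨lt_of_not_ge fun h => ?_, (hmem v hv).2 ▸ hlevel v (hmem v hv).1⟩⟩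
    have hlt : level v < i + 1 := by rw [(hmem v hv).2]; omega
    exact Nat.findGreatest_is_greatest hlt (by omega) h

namespace WaiterClient

variable {α ι : Type*} [DecidableEq α] (q : ℕ)

noncomputable def setPotential (F s : Finset α) : ℝ :=
  exp (-(#(s ∩ F) : ℝ) / (2 * (q + 1)))

variable (I : Finset ι) (S : ι → Finset α)

noncomputable def potential (F C : Finset α) : ℝ :=
  ∑ i ∈ I with Disjoint (S i) C, setPotential q F (S i)

noncomputable def elemPotential (F C : Finset α) (v : α) : ℝ :=
  ∑ i ∈ I with Disjoint (S i) C ∧ v ∈ S i, setPotential q F (S i)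

variable {q I S}

theorem setPotential_pos (F s : Finset α) : 0 < setPotential q F s := exp_pos _

theorem potential_nonneg (F C : Finset α) : 0 ≤ potential q I S F C :=
  sum_nonneg fun i _ => (setPotential_pos F (S i)).le

theorem elemPotential_nonneg (F C : Finset α) (v : α) : 0 ≤ elemPotential q I S F C v :=
  sum_nonneg fun i _ => (setPotential_pos F (S i)).le

theorem elemPotential_le_potential (F C : Finset α) (v : α) :
    elemPotential q I S F C v ≤ potential q I S F C :=
  sum_le_sum_of_subset_of_nonneg
    (fun _ hi => mem_filter.2 ⟨(mem_filter.1 hi).1, (mem_filter.1 hi).2.1⟩)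
    fun i _ _ => (setPotential_pos F (S i)).le

theorem setPotential_sdiff_le {F O : Finset α} (hO : O ⊆ F) (hOq : #O ≤ q + 1)
    (s : Finset α) :
    setPotential q (F \ O) s ≤ setPotential q F s * (1 + 5 / (6 * (q + 1)) * #(s ∩ O)) := by
  have hsplit : (#(s ∩ (F \ O)) : ℝ) + #(s ∩ O) = #(s ∩ F) := by
    have := card_sdiff_add_card_inter (s ∩ F) O
    rw [inter_sdiff_assoc, inter_assoc, inter_eq_right.2 hO] at this
    exact_mod_cast this
  have hq : (0 : ℝ) < 2 * (q + 1) := by positivity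
  have hO_half : (#(s ∩ O) : ℝ) / (2 * (q + 1)) ≤ 1 / 2 := by
    rw [div_le_iff₀ hq]
    have : (#(s ∩ O) : ℝ) ≤ q + 1 := by
      exact_mod_cast (card_le_card inter_subset_right).trans hOq
    linarith
  calc setPotential q (F \ O) s
      = setPotential q F s * exp ((#(s ∩ O) : ℝ) / (2 * (q + 1))) := by
        rw [setPotential, setPotential, ← exp_add, ← hsplit]; ring_nf
    _ ≤ setPotential q F s * (1 + 5 / 3 * ((#(s ∩ O) : ℝ) / (2 * (q + 1)))) := by
        gcongr
        · exact (setPotential_pos F s).le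
        · exact exp_le_one_add_five_thirds_mul (by positivity) hO_half
    _ = setPotential q F s * (1 + 5 / (6 * (q + 1)) * #(s ∩ O)) := by
        field_simp; ring

theorem potential_sdiff_insert_le {F C O : Finset α} {x : α} (hO : O ⊆ F) (hOq : #O ≤ q + 1) :
    potential q I S (F \ O) (insert x C) ≤ potential q I S F C - elemPotential q I S F C x
      + 5 / (6 * (q + 1)) * ∑ v ∈ O.erase x, elemPotential q I S F C v := by
  set T := I.filter fun i => Disjoint (S i) C ∧ x ∉ S i
  have hT : potential q I S (F \ O) (insert x C) = ∑ i ∈ T, setPotential q (F \ O) (S i) := by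
    simp only [potential, T, disjoint_insert_right, and_comm]
  have hsplit :
      potential q I S F C = elemPotential q I S F C x + ∑ i ∈ T, setPotential q F (S i) := by
    simp only [potential, elemPotential, T, ← filter_filter]
    exact (sum_filter_add_sum_filter_not _ _ _).symm
  have hcount : ∑ i ∈ T, setPotential q F (S i) * #(S i ∩ O)
      ≤ ∑ v ∈ O.erase x, elemPotential q I S F C v := by
    calc ∑ i ∈ T, setPotential q F (S i) * #(S i ∩ O)
        = ∑ i ∈ T, ∑ _v ∈ S i ∩ O.erase x, setPotential q F (S i) := by
          refine sum_congr rfl fun i hi => ?_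
          have hxi : x ∉ S i := (mem_filter.1 hi).2.2
          rw [sum_const, nsmul_eq_mul, mul_comm, inter_erase, erase_eq_of_notMem
            (fun h => hxi (mem_inter.1 h).1)]
      _ = ∑ v ∈ O.erase x, ∑ i ∈ T with v ∈ S i, setPotential q F (S i) :=
          sum_comm' fun i v => by simp only [mem_filter, mem_inter]; tauto
      _ ≤ ∑ v ∈ O.erase x, elemPotential q I S F C v := by
          refine sum_le_sum fun v _ => sum_le_sum_of_subset_of_nonneg (fun i hi => ?_)
            fun i _ _ => (setPotential_pos F (S i)).le
          simp only [T, mem_filter] at hi ⊢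
          exact ⟨hi.1.1, hi.1.2.1, hi.2⟩
  have hc : (0 : ℝ) ≤ 5 / (6 * (q + 1)) := by positivity
  calc potential q I S (F \ O) (insert x C)
      ≤ ∑ i ∈ T, setPotential q F (S i) * (1 + 5 / (6 * (q + 1)) * #(S i ∩ O)) := by
        rw [hT]; exact sum_le_sum fun i _ => setPotential_sdiff_le hO hOq (S i)
    _ = ∑ i ∈ T, setPotential q F (S i)
          + 5 / (6 * (q + 1)) * ∑ i ∈ T, setPotential q F (S i) * #(S i ∩ O) := by
        rw [mul_sum, ← sum_add_distrib]; exact sum_congr rfl fun i _ => by ring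
    _ ≤ _ := by rw [hsplit]; linarith [mul_le_mul_of_nonneg_left hcount hc]

theorem potential_sdiff_insert_le_of_le {F C O : Finset α} {x : α} {τ : ℝ} (hO : O ⊆ F)
    (hOq : #O = q + 1) (hx : x ∈ O) (hτ₀ : 0 ≤ τ)
    (hτ : ∀ v ∈ O.erase x, elemPotential q I S F C v ≤ τ) :
    potential q I S (F \ O) (insert x C)
      ≤ potential q I S F C - elemPotential q I S F C x + 5 / 6 * τ := by
  have hsum : ∑ v ∈ O.erase x, elemPotential q I S F C v ≤ q * τ := by
    simpa [card_erase_of_mem hx, hOq] using sum_le_card_nsmul _ _ _ hτ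
  have hc : 5 / (6 * (q + 1)) * (q * τ) ≤ 5 / 6 * τ := by
    rw [div_mul_eq_mul_div, div_le_iff₀ (by positivity)]
    nlinarith
  have := mul_le_mul_of_nonneg_left hsum (by positivity : (0 : ℝ) ≤ 5 / (6 * (q + 1)))
  linarith [potential_sdiff_insert_le (I := I) (S := S) (C := C) (x := x) hO hOq.le]

theorem exists_offer (C : Finset α) {F : Finset α} {J : ℕ} (hJ : (J + 1) * q < #F) :
    ∃ O ⊆ F, #O = q + 1 ∧ ∀ x ∈ O,
      potential q I S (F \ O) (insert x C) ≤ potential q I S F C * (1 + (5 / 6) ^ J) := by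
  set Φ := potential q I S F C
  have hΦ : 0 ≤ Φ := potential_nonneg F C
  obtain ⟨O, hOF, hO, hlevels⟩ := exists_subset_card_eq_low_or_same_level
    (w := elemPotential q I S F C) (r := 5 / 6) hJ fun v _ => elemPotential_le_potential F C v
  refine ⟨O, hOF, hO, fun x hx => ?_⟩
  have hx₀ : 0 ≤ elemPotential q I S F C x := elemPotential_nonneg F C x
  rcases hlevels with hlow | ⟨i, hlevel⟩
  · have := potential_sdiff_insert_le_of_le hOF hO hx (by positivity)
      fun v hv => hlow v (mem_of_mem_erase hv)
    nlinarith [pow_nonneg (by norm_num : (0 : ℝ) ≤ 5 / 6) J]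
  · have := potential_sdiff_insert_le_of_le hOF hO hx (by positivity)
      fun v hv => (hlevel v (mem_of_mem_erase hv)).2
    have hx_level := (hlevel x hx).1
    rw [pow_succ] at hx_level
    nlinarith [pow_nonneg (by norm_num : (0 : ℝ) ≤ 5 / 6) J]

noncomputable def damping (J : ℕ) : ℝ := ∏ k ∈ range J, (1 + (5 / 6 : ℝ) ^ k)

theorem one_le_damping (J : ℕ) : 1 ≤ damping J :=
  one_le_prod fun k _ => le_add_of_nonneg_right (by positivity)

theorem damping_mono : Monotone damping := fun _ _ hJK =>
  prod_le_prod_of_subset_of_one_le (range_subset_range.2 hJK) (fun _ _ => by positivity)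
    fun _ _ _ => le_add_of_nonneg_right (by positivity)

theorem damping_succ (J : ℕ) : damping (J + 1) = damping J * (1 + (5 / 6) ^ J) :=
  prod_range_succ _ _

theorem damping_le_exp_six (J : ℕ) : damping J ≤ exp 6 := by
  have hgeom : ∑ k ∈ range J, (5 / 6 : ℝ) ^ k ≤ 6 := by
    have := geom_sum_Ico_le_of_lt_one (m := 0) (n := J) (x := (5 / 6 : ℝ)) (by norm_num)
      (by norm_num)
    rw [← range_eq_Ico] at this
    linarith
  calc damping J ≤ exp (∑ k ∈ range J, (5 / 6 : ℝ) ^ k) :=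
        prod_one_add_le_exp_sum _ fun k => by positivity
    _ ≤ exp 6 := exp_le_exp.2 hgeom

theorem exp_neg_half_lt_potential {F C : Finset α} (hF : #F ≤ q) {i : ι} (hi : i ∈ I)
    (hdisj : Disjoint (S i) C) : exp (-(1 / 2)) < potential q I S F C := by
  have hcard : (#(S i ∩ F) : ℝ) ≤ q := by
    exact_mod_cast (card_le_card inter_subset_right).trans hF
  calc exp (-(1 / 2)) < setPotential q F (S i) := by
        rw [setPotential, exp_lt_exp, neg_div, neg_lt_neg_iff, div_lt_iff₀ (by positivity)]
        linarith
    _ ≤ potential q I S F C :=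
        single_le_sum (fun j _ => (setPotential_pos F (S j)).le) (mem_filter.2 ⟨hi, hdisj⟩)

theorem waiterCanForce_of_potential_mul_damping_le (hq : 0 < q) {F C : Finset α}
    (h : potential q I S F C * damping ((#F - 1) / q) ≤ exp (-(1 / 2))) :
    WaiterCanForce q (fun C => ∀ i ∈ I, ¬Disjoint (S i) C) F C := by
  induction hN : #F using Nat.strong_induction_on generalizing F C with
  | _ N ih =>
    have hΦ := potential_nonneg (q := q) (I := I) (S := S) F C
    rw [WaiterCanForce]
    split_ifs with hF
    · intro i hi hdisj
      have := exp_neg_half_lt_potential (q := q) (F := F) (by omega) hi hdisj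
      nlinarith [one_le_damping ((#F - 1) / q)]
    · -- `K = (#F - 1) / q` is the largest number of levels for which the pigeonhole
      -- condition `K * q < #F` holds.
      set K := (#F - 1) / q
      have hK : 1 ≤ K := Nat.div_pos (by omega) hq
      have hKq : K * q ≤ #F - 1 := Nat.div_mul_le_self _ _
      obtain ⟨O, hOF, hO, hnext⟩ := exists_offer (q := q) (I := I) (S := S) (F := F) C
        (J := K - 1) (by rw [Nat.sub_add_cancel hK]; omega)
      have hcard : #(F \ O) = #F - (q + 1) := by rw [card_sdiff_of_subset hOF, hO]
      have hK' : (#(F \ O) - 1) / q ≤ K - 1 := by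
        have hsplit : K = (#F - 1 - q) / q + 1 := by
          rw [← Nat.add_div_right _ hq, Nat.sub_add_cancel (by omega)]
        have := Nat.div_le_div_right (c := q) (show #(F \ O) - 1 ≤ #F - 1 - q by omega)
        omega
      refine ⟨O, hOF, hO, fun x hx _ => ih _ (by omega) ?_ rfl⟩
      calc potential q I S (F \ O) (insert x C) * damping ((#(F \ O) - 1) / q)
          ≤ potential q I S (F \ O) (insert x C) * damping (K - 1) :=
            mul_le_mul_of_nonneg_left (damping_mono hK') (potential_nonneg _ _)
        _ ≤ potential q I S F C * (1 + (5 / 6) ^ (K - 1)) * damping (K - 1) :=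
            mul_le_mul_of_nonneg_right (hnext x hx) (zero_le_one.trans (one_le_damping _))
        _ = potential q I S F C * damping K := by
            rw [mul_assoc, mul_comm (1 + _), ← damping_succ, Nat.sub_add_cancel hK]
        _ ≤ exp (-(1 / 2)) := h

theorem waiterCanForce_of_sum_exp_le (hq : 0 < q) {F : Finset α} (hS : ∀ i ∈ I, S i ⊆ F)
    (h : ∑ i ∈ I, exp (-(#(S i) : ℝ) / (2 * (q + 1))) ≤ exp (-7)) :
    WaiterCanForce q (fun C => ∀ i ∈ I, ¬Disjoint (S i) C) F ∅ := by
  have hΦ : potential q I S F ∅ = ∑ i ∈ I, exp (-(#(S i) : ℝ) / (2 * (q + 1))) := by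
    rw [potential, filter_true_of_mem fun i _ => disjoint_empty_right _]
    exact sum_congr rfl fun i hi => by rw [setPotential, inter_eq_left.2 (hS i hi)]
  apply waiterCanForce_of_potential_mul_damping_le hq
  calc potential q I S F ∅ * damping ((#F - 1) / q) ≤ exp (-7) * exp 6 :=
        mul_le_mul (hΦ ▸ h) (damping_le_exp_six _) (zero_le_one.trans (one_le_damping _))
          (exp_pos _).le
    _ ≤ exp (-(1 / 2)) := by rw [← exp_add]; exact exp_le_exp.2 (by norm_num)

end WaiterClient

section Bipartite

variable {U W : Type*} [DecidableEq U] [DecidableEq W]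

def bipartiteEdges (A : Finset U) (B : Finset W) : Finset (Sym2 (U ⊕ W)) :=
  (A ×ˢ B).image fun p => s(Sum.inl p.1, Sum.inr p.2)

theorem card_bipartiteEdges (A : Finset U) (B : Finset W) :
    #(bipartiteEdges A B) = #A * #B := by
  rw [bipartiteEdges, card_image_of_injective, card_product]
  rintro ⟨a, b⟩ ⟨a', b'⟩ h
  simpa using h

theorem bipartiteEdges_subset_cbBoard {n m : ℕ} (A : Finset (Fin n)) (B : Finset (Fin m)) :
    bipartiteEdges A B ⊆ cbBoard n m := by
  intro e he
  obtain ⟨⟨a, b⟩, -, rfl⟩ := mem_image.1 he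
  simp [cbBoard, completeBipartiteGraph]

end Bipartite

theorem two_pow_mul_exp_neg_le {d n q : ℕ} (hd : 0 < d) (hn : 1500 * d ≤ n)
    (hq : (q : ℝ) ≤ n / (150 * d)) :
    (2 : ℝ) ^ (n + 5 * n / 6) *
      exp (-((⌈(n : ℝ) / (7 * d)⌉₊ * ⌈(n : ℝ) / 7⌉₊ : ℕ) : ℝ) / (2 * (q + 1)))
      ≤ exp (-7) := by
  set a := ⌈(n : ℝ) / (7 * d)⌉₊
  set b := ⌈(n : ℝ) / 7⌉₊
  have hd' : (1 : ℝ) ≤ d := by exact_mod_cast hd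
  have hn' : 1500 * (d : ℝ) ≤ n := by exact_mod_cast hn
  have ha : (n : ℝ) ≤ 7 * d * a := by
    have := Nat.le_ceil ((n : ℝ) / (7 * d)); rwa [div_le_iff₀' (by positivity)] at this
  have hb : (n : ℝ) ≤ 7 * b := by
    have := Nat.le_ceil ((n : ℝ) / 7); rwa [div_le_iff₀' (by positivity)] at this
  have hqd : 150 * d * (q : ℝ) ≤ n := by rwa [le_div_iff₀' (by positivity)] at hq
  have hm : ((5 * n / 6 : ℕ) : ℝ) ≤ 5 * n / 6 := by
    have : ((5 * n / 6 : ℕ) : ℝ) ≤ ((5 * n : ℕ) : ℝ) / 6 := Nat.cast_div_le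
    simpa using this
  have hab : (n : ℝ) ^ 2 ≤ 49 * d * (a * b) := by
    nlinarith [mul_le_mul ha hb (by positivity) (by positivity)]
  -- `77 / 60 = 7 / 10 * 11 / 6`, from `log 2 < 7 / 10` and `n + 5 * n / 6 ≤ 11 * n / 6`.
  have hX : 77 / 60 * n + 7 ≤ ((a * b : ℕ) : ℝ) / (2 * (q + 1)) := by
    rw [le_div_iff₀ (by positivity), Nat.cast_mul]
    refine le_of_mul_le_mul_left ?_ (by positivity : (0 : ℝ) < d)
    nlinarith
  have h2 : (2 : ℝ) ≤ exp (7 / 10) := by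
    rw [← exp_log two_pos]; exact exp_le_exp.2 (log_two_lt_d9.le.trans (by norm_num))
  set m := 5 * n / 6
  set X := ((a * b : ℕ) : ℝ)
  calc (2 : ℝ) ^ (n + m) * exp (-X / (2 * (q + 1)))
      ≤ exp (7 / 10) ^ (n + m) * exp (-X / (2 * (q + 1))) := by gcongr
    _ = exp (7 / 10 * (n + m) - X / (2 * (q + 1))) := by
        rw [← exp_nat_mul, ← exp_add]; push_cast; ring_nf
    _ ≤ exp (-7) := exp_le_exp.2 (by nlinarith)

/-- Let `G` be the complete bipartite graph with parts `U` of size `n` and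
`W` of size `⌊5n/6⌋`, and let `d, q` be positive integers with `q ≤ n / (150 d)`.  For all
sufficiently large `n`, in the `(q : 1)` Waiter-Client game on `E(G)` Waiter has a strategy
ensuring that at the end of the game, for every `A ⊆ U` of size `⌈n/(7d)⌉` and every
`B ⊆ W` of size `⌈n/7⌉`, Client has claimed an edge between `A` and `B`. -/
theorem statement15 (d : ℕ) (hd : 0 < d) :
    ∃ N : ℕ, ∀ n : ℕ, N ≤ n → ∀ q : ℕ, 0 < q → (q : ℝ) ≤ (n : ℝ) / (150 * d) →
      WaiterCanForce q
        (fun C : Finset (Sym2 (Fin n ⊕ Fin (5 * n / 6))) =>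
          ∀ A : Finset (Fin n), A.card = ⌈(n : ℝ) / (7 * d)⌉₊ →
            ∀ B : Finset (Fin (5 * n / 6)), B.card = ⌈(n : ℝ) / 7⌉₊ →
              ∃ a ∈ A, ∃ b ∈ B, s(Sum.inl a, Sum.inr b) ∈ C)
        (cbBoard n (5 * n / 6)) ∅ := by
  refine ⟨1500 * d, fun n hn q hq hqn => ?_⟩
  set I := powersetCard ⌈(n : ℝ) / (7 * d)⌉₊ (univ : Finset (Fin n)) ×ˢ
    powersetCard ⌈(n : ℝ) / 7⌉₊ (univ : Finset (Fin (5 * n / 6)))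
  have hI : (#I : ℝ) ≤ 2 ^ (n + 5 * n / 6) := by
    rw [card_product, card_powersetCard, card_powersetCard, card_univ, card_univ,
      Fintype.card_fin, Fintype.card_fin, pow_add]
    exact_mod_cast Nat.mul_le_mul (Nat.choose_le_two_pow _ _) (Nat.choose_le_two_pow _ _)
  have hsum :
      ∑ p ∈ I, exp (-(#(bipartiteEdges p.1 p.2) : ℝ) / (2 * (q + 1))) ≤ exp (-7) := by
    rw [sum_congr rfl fun p hp => by
      rw [card_bipartiteEdges, (mem_powersetCard_univ.1 (mem_product.1 hp).1),
        (mem_powersetCard_univ.1 (mem_product.1 hp).2)], sum_const, nsmul_eq_mul]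
    exact (mul_le_mul_of_nonneg_right hI (exp_pos _).le).trans
      (two_pow_mul_exp_neg_le hd hn hqn)
  refine (WaiterClient.waiterCanForce_of_sum_exp_le hq
    (fun p _ => bipartiteEdges_subset_cbBoard p.1 p.2) hsum).mono ?_
  intro C hC A hA B hB
  obtain ⟨e, he, heC⟩ := not_disjoint_iff.1
    (hC (A, B) (mem_product.2 ⟨mem_powersetCard_univ.2 hA, mem_powersetCard_univ.2 hB⟩))
  obtain ⟨⟨a, b⟩, hab, rfl⟩ := mem_image.1 he
  exact ⟨a, (mem_product.1 hab).1, b, (mem_product.1 hab).2, heC⟩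
end
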